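/- arXiv:math/0110115 — 10 statements merged into one kernel-verified Lean document; each statement's English description precedes it below -/
import Mathlib

section
/- Let V be a unital Jordan algebra over ℝ, let a ≠ 0 be an idempotent, and let u ∈ V satisfy u³ = u, a·u = ½u and a·u² = a. Set c := u² − a. Then: (i) c² = c and a·c = 0; (ii) u·c = ½u, u²·c = c, u²·a = a, u²·u = u and u⁴ = u² (so u² = a + c acts as a unit on the linear span of {a, u, u²}); (iii) the ℝ-linear span of {a, u, u²} is closed under multiplication, hence equals the subalgebra of V generated by a and u. -/
/-- In a unital Jordan algebra `V` over `ℝ`, if `a ≠ 0` is an idempotent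
and `u` satisfies `u³ = u`, `a·u = ½u`, `a·u² = a`, then with `c := u² - a`:
(i) `c` is an idempotent with `a·c = 0`;
(ii) `u·c = ½u`, `u²·c = c`, `u²·a = a`, `u²·u = u`, `u⁴ = u²` and `u² = a + c` acts as a
unit on the span of `{a, u, u²}`;
(iii) the `ℝ`-linear span of `{a, u, u²}` is closed under multiplication. -/
theorem jordan_subalgebra_of_projection_tripotent
    {V : Type*} [NonAssocRing V] [Module ℝ V] [SMulCommClass ℝ V V] [IsScalarTower ℝ V V]
    (comm : ∀ x y : V, x * y = y * x)
    (jordan : ∀ x y : V, (x * y) * (x * x) = x * (y * (x * x)))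
    (a u : V) (ha : a * a = a) (ha0 : a ≠ 0)
    (hu3 : u * (u * u) = u)
    (hau : a * u = (1 / 2 : ℝ) • u)
    (hau2 : a * (u * u) = a)
    (c : V) (hc : c = u * u - a) :
    (c * c = c ∧ a * c = 0) ∧
    (u * c = (1 / 2 : ℝ) • u ∧ (u * u) * c = c ∧ (u * u) * a = a ∧ (u * u) * u = u ∧
      u * (u * (u * u)) = u * u ∧ u * u = a + c ∧
      ∀ x ∈ Submodule.span ℝ ({a, u, u * u} : Set V), (u * u) * x = x) ∧
    (∀ x ∈ Submodule.span ℝ ({a, u, u * u} : Set V),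
      ∀ y ∈ Submodule.span ℝ ({a, u, u * u} : Set V),
        x * y ∈ Submodule.span ℝ ({a, u, u * u} : Set V)) := by
  have h22 : (u * u) * (u * u) = u * u := by rw [jordan u u, hu3]
  have hu2u : (u * u) * u = u := by rw [comm, hu3]
  have hu2a : (u * u) * a = a := by rw [comm, hau2]
  have hua : u * a = (1 / 2 : ℝ) • u := by rw [comm, hau]
  have hcc : c * c = c := by
    rw [hc, sub_mul, mul_sub, mul_sub, h22, hu2a, hau2, ha]
    abel
  have hac : a * c = 0 := by rw [hc, mul_sub, hau2, ha, sub_self]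
  have huc : u * c = (1 / 2 : ℝ) • u := by
    rw [hc, mul_sub, hu3, hua]
    rw [show u = (1 : ℝ) • u from (one_smul ℝ u).symm]
    rw [smul_smul, ← sub_smul]
    norm_num
  have hu2c : (u * u) * c = c := by rw [hc, mul_sub, h22, hu2a]
  have hu4 : u * (u * (u * u)) = u * u := by rw [hu3]
  have hsum : u * u = a + c := by rw [hc]; abel
  have hunit : ∀ x ∈ Submodule.span ℝ ({a, u, u * u} : Set V), (u * u) * x = x := by
    intro x hx
    induction hx using Submodule.span_induction with
    | mem x hx =>
      rcases hx with rfl | rfl | rfl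
      · exact hu2a
      · exact hu2u
      · exact h22
    | zero => exact mul_zero _
    | add x y _ _ hx hy => rw [mul_add, hx, hy]
    | smul r x _ hx => rw [mul_smul_comm, hx]
  refine ⟨⟨hcc, hac⟩, ⟨huc, hu2c, hu2a, hu2u, hu4, hsum, hunit⟩, ?_⟩
  intro x hx y hy
  induction hx using Submodule.span_induction with
  | mem x hx =>
    induction hy using Submodule.span_induction with
    | mem y hy =>
      have mem_a : a ∈ Submodule.span ℝ ({a, u, u * u} : Set V) :=
        Submodule.subset_span (by simp)
      have mem_u : u ∈ Submodule.span ℝ ({a, u, u * u} : Set V) :=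
        Submodule.subset_span (by simp)
      have mem_u2 : u * u ∈ Submodule.span ℝ ({a, u, u * u} : Set V) :=
        Submodule.subset_span (by simp)
      rcases hx with rfl | rfl | rfl <;> rcases hy with rfl | rfl | rfl
      · rw [ha]; exact mem_a
      · rw [hau]; exact Submodule.smul_mem _ _ mem_u
      · rw [hau2]; exact mem_a
      · rw [hua]; exact Submodule.smul_mem _ _ mem_u
      · exact mem_u2
      · rw [hu3]; exact mem_u
      · rw [hu2a]; exact mem_a
      · rw [hu2u]; exact mem_u
      · rw [h22]; exact mem_u2
    | zero => rw [mul_zero]; exact Submodule.zero_mem _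
    | add y z hy hz hy' hz' => rw [mul_add]; exact Submodule.add_mem _ hy' hz'
    | smul r y hy hy' => rw [mul_smul_comm]; exact Submodule.smul_mem _ _ hy'
  | zero => rw [zero_mul]; exact Submodule.zero_mem _
  | add x z hx hz hx' hz' => rw [add_mul]; exact Submodule.add_mem _ hx' hz'
  | smul r x hx hx' => rw [smul_mul_assoc]; exact Submodule.smul_mem _ _ hx'
end

section
/- Let V be a unital Jordan algebra over ℝ, let a ≠ 0 be an idempotent, and let u ∈ V satisfy u ≠ 0, u³ = u, a·u = ½u and a·u² = a; set c := u² − a. Then a, u, c are linearly independent over ℝ, and there exists a unique injective ℝ-linear map φ from the span of {a, u, c} into the 2×2 real matrices such that φ(x·y) = ½(φ(x)φ(y) + φ(y)φ(x)) for all x, y in the span, and φ(a) = [[1,0],[0,0]], φ(u) = [[0,1],[1,0]], φ(c) = [[0,0],[0,1]]; its image is the space of symmetric 2×2 real matrices. -/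
/-! With `c := u² - a`, the hypotheses say that `a` and `c` are orthogonal idempotents, that `u`
lies in the `½`-eigenspace of multiplication by each of them, and that `u² = a + c`: this is the
multiplication table of `E₁₁`, `E₁₂ + E₂₁`, `E₂₂` in `Sym₂(ℝ)` under `X ∘ Y = ½(XY + YX)`.
The Jordan identity enters only through `c² = c`, via `u⁴ = u · u³ = u²`. The elements `a`, `u`,
`c` are eigenvectors of `x ↦ a · x` for the distinct eigenvalues `1`, `½`, `0`, hence linearly
independent, so `a, u, c ↦ E₁₁, E₁₂ + E₂₁, E₂₂` extends to a linear map; equal multiplication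
tables make it a Jordan isomorphism of the span onto `Sym₂(ℝ)`, unique because it is prescribed
on a spanning set. -/

/-- The representation property of a linear map `φ : V → M₂(ℝ)` on the span of `{a, u, c}`:
`φ` is injective on the span, satisfies `φ(x·y) = ½(φ(x)φ(y) + φ(y)φ(x))` for `x, y` in the
span, sends `a`, `u`, `c` to the prescribed symmetric matrices, and maps the span onto the
space of symmetric `2×2` real matrices. -/
def IsSymRep {V : Type*} [NonAssocRing V] [Module ℝ V]
    (a u c : V) (φ : V →ₗ[ℝ] Matrix (Fin 2) (Fin 2) ℝ) : Prop :=
  Set.InjOn φ (Submodule.span ℝ ({a, u, c} : Set V)) ∧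
  (∀ x ∈ Submodule.span ℝ ({a, u, c} : Set V),
    ∀ y ∈ Submodule.span ℝ ({a, u, c} : Set V),
      φ (x * y) = (1 / 2 : ℝ) • (φ x * φ y + φ y * φ x)) ∧
  φ a = !![1, 0; 0, 0] ∧ φ u = !![0, 1; 1, 0] ∧ φ c = !![0, 0; 0, 1] ∧
  φ '' (Submodule.span ℝ ({a, u, c} : Set V) : Set V) =
    {M : Matrix (Fin 2) (Fin 2) ℝ | M.IsSymm}

theorem LinearIndependent.exists_linearMap_apply_eq {ι K V W : Type*} [Field K]
    [AddCommGroup V] [Module K V] [AddCommGroup W] [Module K W] {v : ι → V}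
    (hv : LinearIndependent K v) (w : ι → W) : ∃ φ : V →ₗ[K] W, ∀ i, φ (v i) = w i := by
  obtain ⟨φ, hφ⟩ := ((Module.Basis.span hv).constr K w).exists_extend
  refine ⟨φ, fun i => ?_⟩
  have := congr($hφ (Module.Basis.span hv i))
  rwa [LinearMap.comp_apply, Module.Basis.constr_basis, Module.Basis.span_apply] at this

namespace Matrix

theorem smul_add_smul_add_smul_eq_sym2 (α β γ : ℝ) :
    α • !![1, 0; 0, 0] + β • !![0, 1; 1, 0] + γ • !![0, 0; 0, 1] = !![α, β; β, γ] := by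
  ext i j; fin_cases i <;> fin_cases j <;> simp

theorem sym2_eq_sym2_iff {α β γ α' β' γ' : ℝ} :
    !![α, β; β, γ] = !![α', β'; β', γ'] ↔ α = α' ∧ β = β' ∧ γ = γ' := by
  simp only [EmbeddingLike.apply_eq_iff_eq, vecCons_inj, and_true]; tauto

theorem isSymm_iff_exists_sym2 {M : Matrix (Fin 2) (Fin 2) ℝ} :
    M.IsSymm ↔ ∃ α β γ : ℝ, !![α, β; β, γ] = M := by
  constructor
  · intro h
    refine ⟨M 0 0, M 0 1, M 1 1, ?_⟩
    have := h.apply 0 1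
    ext i j; fin_cases i <;> fin_cases j <;> simp [this]
  · rintro ⟨α, β, γ, rfl⟩
    ext i j; fin_cases i <;> fin_cases j <;> simp

theorem jordanProduct_sym2 (α β γ α' β' γ' : ℝ) :
    (1 / 2 : ℝ) • (!![α, β; β, γ] * !![α', β'; β', γ'] + !![α', β'; β', γ'] * !![α, β; β, γ]) =
      !![α * α' + β * β', (α * β' + α' * β) / 2 + (β * γ' + β' * γ) / 2;
         (α * β' + α' * β) / 2 + (β * γ' + β' * γ) / 2, β * β' + γ * γ'] := by
  ext i j; fin_cases i <;> fin_cases j <;> simp <;> ring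

end Matrix

section Sym2Triple

variable {V : Type*} [NonAssocRing V] [Module ℝ V]

structure IsSym2Triple (a u c : V) : Prop where
  mul_aa : a * a = a
  mul_cc : c * c = c
  mul_ac : a * c = 0
  mul_au : a * u = (1 / 2 : ℝ) • u
  mul_cu : c * u = (1 / 2 : ℝ) • u
  mul_uu : u * u = a + c

theorem isSym2Triple_of_mul_mul_self_eq_self (comm : ∀ x y : V, x * y = y * x)
    (jordan : ∀ x y : V, (x * y) * (x * x) = x * (y * (x * x))) {a u : V} (ha : a * a = a)
    (hu3 : u * (u * u) = u) (hau : a * u = (1 / 2 : ℝ) • u) (hau2 : a * (u * u) = a) :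
    IsSym2Triple a u (u * u - a) where
  mul_aa := ha
  mul_cc := by
    have hu4 : (u * u) * (u * u) = u * u := by rw [jordan u u, hu3]
    rw [sub_mul, mul_sub, mul_sub, hu4, comm _ a, hau2, ha]
    abel
  mul_ac := by rw [mul_sub, hau2, ha, sub_self]
  mul_au := hau
  mul_cu := by rw [sub_mul, comm _ u, hu3, hau]; module
  mul_uu := by abel

theorem ne_zero_of_mul_eq_half_smul {x y : V} (h : x * y = (1 / 2 : ℝ) • y) (hy : y ≠ 0) :
    x ≠ 0 := by
  rintro rfl
  exact hy (by simpa using h.symm)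

namespace IsSym2Triple

variable {a u c : V} (h : IsSym2Triple a u c)
include h

theorem linearIndependent [SMulCommClass ℝ V V] (hu : u ≠ 0) :
    LinearIndependent ℝ ![a, u, c] := by
  refine Module.End.eigenvectors_linearIndependent' (LinearMap.mulLeft ℝ a) ![1, 1 / 2, 0]
    ?_ _ ?_
  · intro i j; fin_cases i <;> fin_cases j <;> norm_num
  · have ha := ne_zero_of_mul_eq_half_smul h.mul_au hu
    have hc := ne_zero_of_mul_eq_half_smul h.mul_cu hu
    intro i
    fin_cases i <;>
      simp [Module.End.hasEigenvector_iff, h.mul_aa, h.mul_au, h.mul_ac, ha, hu, hc]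

theorem mul_linearCombination [SMulCommClass ℝ V V] [IsScalarTower ℝ V V]
    (comm : ∀ x y : V, x * y = y * x) (α β γ α' β' γ' : ℝ) :
    (α • a + β • u + γ • c) * (α' • a + β' • u + γ' • c) =
      (α * α' + β * β') • a + ((α * β' + α' * β) / 2 + (β * γ' + β' * γ) / 2) • u +
        (β * β' + γ * γ') • c := by
  simp only [add_mul, mul_add, smul_mul_assoc, mul_smul_comm]
  rw [comm u a, comm c a, comm u c, h.mul_aa, h.mul_au, h.mul_ac, h.mul_uu, h.mul_cu, h.mul_cc]
  module

theorem isSymRep {φ : V →ₗ[ℝ] Matrix (Fin 2) (Fin 2) ℝ} [SMulCommClass ℝ V V]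
    [IsScalarTower ℝ V V] (comm : ∀ x y : V, x * y = y * x) (hφa : φ a = !![1, 0; 0, 0])
    (hφu : φ u = !![0, 1; 1, 0]) (hφc : φ c = !![0, 0; 0, 1]) : IsSymRep a u c φ := by
  have hφ (α β γ : ℝ) : φ (α • a + β • u + γ • c) = !![α, β; β, γ] := by
    rw [map_add, map_add, map_smul, map_smul, map_smul, hφa, hφu, hφc,
      Matrix.smul_add_smul_add_smul_eq_sym2]
  refine ⟨?_, ?_, hφa, hφu, hφc, ?_⟩
  · intro x hx y hy hxy
    obtain ⟨α, β, γ, rfl⟩ := Submodule.mem_span_triple.1 hx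
    obtain ⟨α', β', γ', rfl⟩ := Submodule.mem_span_triple.1 hy
    rw [hφ, hφ, Matrix.sym2_eq_sym2_iff] at hxy
    obtain ⟨rfl, rfl, rfl⟩ := hxy
    rfl
  · intro x hx y hy
    obtain ⟨α, β, γ, rfl⟩ := Submodule.mem_span_triple.1 hx
    obtain ⟨α', β', γ', rfl⟩ := Submodule.mem_span_triple.1 hy
    rw [h.mul_linearCombination comm, hφ, hφ, hφ, Matrix.jordanProduct_sym2]
  · ext M
    simp only [Set.mem_image, SetLike.mem_coe, Submodule.mem_span_triple, Set.mem_ofPred_eq,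
      Matrix.isSymm_iff_exists_sym2]
    constructor
    · rintro ⟨x, ⟨α, β, γ, rfl⟩, rfl⟩
      exact ⟨α, β, γ, (hφ α β γ).symm⟩
    · rintro ⟨α, β, γ, rfl⟩
      exact ⟨_, ⟨α, β, γ, rfl⟩, hφ α β γ⟩

end IsSym2Triple

theorem IsSymRep.eqOn_span {a u c : V} {φ ψ : V →ₗ[ℝ] Matrix (Fin 2) (Fin 2) ℝ}
    (hφ : IsSymRep a u c φ) (hψ : IsSymRep a u c ψ) :
    ∀ x ∈ Submodule.span ℝ ({a, u, c} : Set V), ψ x = φ x := by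
  refine LinearMap.eqOn_span ?_
  rintro x (rfl | rfl | rfl)
  exacts [hψ.2.2.1.trans hφ.2.2.1.symm, hψ.2.2.2.1.trans hφ.2.2.2.1.symm,
    hψ.2.2.2.2.1.trans hφ.2.2.2.2.1.symm]

end Sym2Triple

theorem jordan_subalgebra_iso_sym2_general
    {V : Type*} [NonAssocRing V] [Module ℝ V] [SMulCommClass ℝ V V] [IsScalarTower ℝ V V]
    (comm : ∀ x y : V, x * y = y * x)
    (jordan : ∀ x y : V, (x * y) * (x * x) = x * (y * (x * x)))
    (a u : V) (ha : a * a = a)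
    (hu0 : u ≠ 0) (hu3 : u * (u * u) = u)
    (hau : a * u = (1 / 2 : ℝ) • u)
    (hau2 : a * (u * u) = a)
    (c : V) (hc : c = u * u - a) :
    LinearIndependent ℝ ![a, u, c] ∧
    ∃ φ : V →ₗ[ℝ] Matrix (Fin 2) (Fin 2) ℝ, IsSymRep a u c φ ∧
      ∀ ψ : V →ₗ[ℝ] Matrix (Fin 2) (Fin 2) ℝ, IsSymRep a u c ψ →
        ∀ x ∈ Submodule.span ℝ ({a, u, c} : Set V), ψ x = φ x := by
  subst hc
  have h := isSym2Triple_of_mul_mul_self_eq_self comm jordan ha hu3 hau hau2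
  have hli := h.linearIndependent hu0
  obtain ⟨φ, hφ⟩ := hli.exists_linearMap_apply_eq
    (![!![1, 0; 0, 0], !![0, 1; 1, 0], !![0, 0; 0, 1]] : Fin 3 → Matrix (Fin 2) (Fin 2) ℝ)
  have hrep := h.isSymRep comm (hφ 0) (hφ 1) (hφ 2)
  exact ⟨hli, φ, hrep, fun ψ hψ => hrep.eqOn_span hψ⟩

/-- With `a ≠ 0` an idempotent, `u ≠ 0` with `u³ = u`, `a·u = ½u`,
`a·u² = a` and `c := u² - a`, the elements `a, u, c` are linearly independent and there is
a unique (on the span) injective `ℝ`-linear representation of the span of `{a, u, c}` onto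
the symmetric `2×2` real matrices sending `a ↦ [[1,0],[0,0]]`, `u ↦ [[0,1],[1,0]]`,
`c ↦ [[0,0],[0,1]]`. -/
theorem jordan_subalgebra_iso_sym2
    {V : Type*} [NonAssocRing V] [Module ℝ V] [SMulCommClass ℝ V V] [IsScalarTower ℝ V V]
    (comm : ∀ x y : V, x * y = y * x)
    (jordan : ∀ x y : V, (x * y) * (x * x) = x * (y * (x * x)))
    (a u : V) (ha : a * a = a) (ha0 : a ≠ 0)
    (hu0 : u ≠ 0) (hu3 : u * (u * u) = u)
    (hau : a * u = (1 / 2 : ℝ) • u)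
    (hau2 : a * (u * u) = a)
    (c : V) (hc : c = u * u - a) :
    LinearIndependent ℝ ![a, u, c] ∧
    ∃ φ : V →ₗ[ℝ] Matrix (Fin 2) (Fin 2) ℝ, IsSymRep a u c φ ∧
      ∀ ψ : V →ₗ[ℝ] Matrix (Fin 2) (Fin 2) ℝ, IsSymRep a u c ψ →
        ∀ x ∈ Submodule.span ℝ ({a, u, c} : Set V), ψ x = φ x :=
  jordan_subalgebra_iso_sym2_general comm jordan a u ha hu0 hu3 hau hau2 c hc
end

section
/- Let a ∈ L(H) be a nonzero projection and let u be a self-adjoint tripotent with au + ua = u and au² + u²a = 2a. Then for every t ∈ ℝ, exp(t·G(a,u)) applied to a equals (cos²t)·a + (½ sin 2t)·u + (sin²t)·(uau). -/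
/-!
`G a u` is an inner derivation, and on the span of `a`, `u`, `uau` it acts by
`a ↦ u`, `u ↦ 2 uau - 2 a`, `uau ↦ -u`, a rotation in disguise. Hence the curve
`t ↦ cos² t • a + (½ sin 2t) • u + sin² t • uau` solves the linear ODE `F' = G a u F` with
`F 0 = a`, and by uniqueness of solutions of linear ODEs it is `t ↦ exp (t • G a u) a`.
-/

variable {H : Type*} [NormedAddCommGroup H] [InnerProductSpace ℂ H] [CompleteSpace H]

/-- For a projection `a` and a self-adjoint `u` in `L(H)`, `G a u` is the bounded linear
operator on `L(H)` given by `z ↦ (ua - au)z - z(ua - au)`. -/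
noncomputable def G (a u : H →L[ℂ] H) : (H →L[ℂ] H) →L[ℝ] (H →L[ℂ] H) :=
  ContinuousLinearMap.mul ℝ (H →L[ℂ] H) (u * a - a * u)
    - (ContinuousLinearMap.mul ℝ (H →L[ℂ] H)).flip (u * a - a * u)

open NormedSpace

section Ring

variable {R : Type*} [Ring R] {a u : R}

theorem mul_mul_eq_zero_of_add_eq (ha : a * a = a) (h1 : a * u + u * a = u) :
    a * u * a = 0 := by
  have h := congrArg (a * ·) h1
  simp only [mul_add, ← mul_assoc, ha, add_eq_left] at h
  exact h

theorem mul_mul_sq_mul_eq (ha : a * a = a) (hu : u * u * u = u)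
    (h2 : a * (u * u) + u * u * a = 2 • a) : u * a * (u * u) * a = u * a := by
  rw [two_smul] at h2
  linear_combination (norm := noncomm_ring) u * h2 * a + 2 * (u * ha) - u * u * u * ha - hu * a

theorem mul_sq_mul_mul_eq (ha : a * a = a) (hu : u * u * u = u)
    (h2 : a * (u * u) + u * u * a = 2 • a) : a * (u * u) * a * u = a * u := by
  rw [two_smul] at h2
  linear_combination (norm := noncomm_ring) a * h2 * u + 2 * (ha * u) - ha * (u * u * u) - a * hu

end Ring

section LinearODE

variable {E : Type*} [NormedAddCommGroup E] [NormedSpace ℝ E]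

theorem hasDerivAt_cos_sq_smul_add_sin_sq_smul (D : E →L[ℝ] E) {x y z : E}
    (hx : D x = y) (hy : D y = 2 • z - 2 • x) (hz : D z = -y) (t : ℝ) :
    HasDerivAt (fun t => Real.cos t ^ 2 • x + (1 / 2 * Real.sin (2 * t)) • y + Real.sin t ^ 2 • z)
      (D (Real.cos t ^ 2 • x + (1 / 2 * Real.sin (2 * t)) • y + Real.sin t ^ 2 • z)) t := by
  have hcos : HasDerivAt (fun t => Real.cos t ^ 2) (2 * Real.cos t * -Real.sin t) t := by
    simpa using (Real.hasDerivAt_cos t).fun_pow 2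
  have hsin : HasDerivAt (fun t => Real.sin t ^ 2) (2 * Real.sin t * Real.cos t) t := by
    simpa using (Real.hasDerivAt_sin t).fun_pow 2
  have hsin2 : HasDerivAt (fun t => 1 / 2 * Real.sin (2 * t)) (Real.cos (2 * t)) t :=
    (((Real.hasDerivAt_sin (2 * t)).comp t ((hasDerivAt_id' t).const_mul 2)).const_mul
      (1 / 2 : ℝ)).congr_deriv (by ring)
  refine (((hcos.smul_const x).add (hsin2.smul_const y)).add (hsin.smul_const z)).congr_deriv ?_
  simp only [map_add, map_smul, hx, hy, hz, Real.cos_two_mul, Real.sin_two_mul, Real.sin_sq]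
  module

theorem exp_smul_apply_eq_of_hasDerivAt [CompleteSpace E] (D : E →L[ℝ] E) {F : ℝ → E}
    (hF : ∀ t, HasDerivAt F (D (F t)) t) (t : ℝ) : exp (t • D) (F 0) = F t := by
  have hexp (s : ℝ) : HasDerivAt (fun s => exp (s • D) (F 0)) (D (exp (s • D) (F 0))) s := by
    simpa using (hasDerivAt_exp_smul_const' D s).clm_apply (hasDerivAt_const s (F 0))
  have := ODE_solution_unique_univ (v := fun _ => D) (s := fun _ => Set.univ) (t₀ := 0)
    (fun _ => D.lipschitz.lipschitzOnWith) (fun s => ⟨hexp s, trivial⟩) (fun s => ⟨hF s, trivial⟩)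
    (by simp)
  exact congrFun this t

end LinearODE

section Orbit

variable {a u : H →L[ℂ] H}

theorem G_apply (z : H →L[ℂ] H) : G a u z = (u * a - a * u) * z - z * (u * a - a * u) :=
  rfl

theorem G_apply_left (ha : a * a = a) (h1 : a * u + u * a = u) : G a u a = u := by
  rw [G_apply]
  linear_combination (norm := noncomm_ring)
    u * ha + ha * u - 2 * mul_mul_eq_zero_of_add_eq ha h1 + h1

theorem G_apply_right (h2 : a * (u * u) + u * u * a = 2 • a) :
    G a u u = 2 • (u * a * u) - 2 • a := by
  rw [G_apply, ← h2]
  noncomm_ring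

theorem G_apply_conj (ha : a * a = a) (hu : u * u * u = u) (h1 : a * u + u * a = u)
    (h2 : a * (u * u) + u * u * a = 2 • a) : G a u (u * a * u) = -u := by
  rw [G_apply]
  linear_combination (norm := noncomm_ring) 2 * (u * mul_mul_eq_zero_of_add_eq ha h1 * u) -
    mul_sq_mul_mul_eq ha hu h2 - mul_mul_sq_mul_eq ha hu h2 - h1

end Orbit

theorem exp_G_apply_projection_general (a u : H →L[ℂ] H)
    (haidem : a * a = a)
    (hu3 : u * u * u = u)
    (h1 : a * u + u * a = u)
    (h2 : a * (u * u) + (u * u) * a = 2 • a) :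
    ∀ t : ℝ, NormedSpace.exp (t • G a u) a =
      (Real.cos t ^ 2) • a + ((1 / 2) * Real.sin (2 * t)) • u +
        (Real.sin t ^ 2) • (u * a * u) := by
  intro t
  have hF := hasDerivAt_cos_sq_smul_add_sin_sq_smul (G a u) (G_apply_left haidem h1)
    (G_apply_right h2) (G_apply_conj haidem hu3 h1 h2)
  simpa using exp_smul_apply_eq_of_hasDerivAt (G a u) hF t

/-- If `a ∈ L(H)` is a nonzero projection and `u` is a self-adjoint
tripotent with `au + ua = u` and `au² + u²a = 2a`, then for every `t ∈ ℝ`,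
`exp(t·G(a,u)) a = (cos²t)·a + (½ sin 2t)·u + (sin²t)·(uau)`. -/
theorem exp_G_apply_projection (a u : H →L[ℂ] H)
    (hasa : IsSelfAdjoint a) (haidem : a * a = a) (ha0 : a ≠ 0)
    (husa : IsSelfAdjoint u) (hu3 : u * u * u = u)
    (h1 : a * u + u * a = u)
    (h2 : a * (u * u) + (u * u) * a = 2 • a) :
    ∀ t : ℝ, NormedSpace.exp (t • G a u) a =
      (Real.cos t ^ 2) • a + ((1 / 2) * Real.sin (2 * t)) • u +
        (Real.sin t ^ 2) • (u * a * u) :=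
  exp_G_apply_projection_general a u haidem hu3 h1 h2
end

section
/- Let a ∈ L(H) be a projection and let u be a self-adjoint tripotent with au + ua = u. Set p := ½(au² + u²a). Then p is a projection satisfying pa = ap = p (so p ≤ a), pu + up = u, and pu² + u²p = 2p; moreover if u ≠ 0 then p ≠ 0. -/
variable {H : Type*} [NormedAddCommGroup H] [InnerProductSpace ℂ H] [CompleteSpace H]

/-- Let `a ∈ L(H)` be a projection and `u` a self-adjoint tripotent with
`au + ua = u`.  Then `p := ½(au² + u²a)` is a projection satisfying `pa = ap = p`
(so `p ≤ a`), `pu + up = u`, `pu² + u²p = 2p`, and `p ≠ 0` whenever `u ≠ 0`. -/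
theorem tripotent_support_projection (a u : H →L[ℂ] H)
    (hasa : IsSelfAdjoint a) (haidem : a * a = a)
    (husa : IsSelfAdjoint u) (hu3 : u * u * u = u)
    (h1 : a * u + u * a = u)
    (p : H →L[ℂ] H) (hp : p = (1 / 2 : ℝ) • (a * (u * u) + (u * u) * a)) :
    IsSelfAdjoint p ∧ p * p = p ∧
    p * a = p ∧ a * p = p ∧
    p * u + u * p = u ∧
    p * (u * u) + (u * u) * p = 2 • p ∧
    (u ≠ 0 → p ≠ 0) := by
  have hcomm : a * (u * u) = (u * u) * a := by
    linear_combination (norm := noncomm_ring) h1 * u - u * h1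
  have hpu : p = a * (u * u) := by
    rw [hp, ← hcomm]; module
  have hu4 : (u * u) * (u * u) = u * u := by
    linear_combination (norm := noncomm_ring) u * hu3
  have huau : u * a * u = u * u - a * (u * u) := by
    linear_combination (norm := noncomm_ring) h1 * u
  refine ⟨?_, ?_, ?_, ?_, ?_, ?_, ?_⟩
  · rw [hpu]
    show star (a * (u * u)) = a * (u * u)
    rw [star_mul, star_mul, husa.star_eq, hasa.star_eq]
    exact hcomm.symm
  · rw [hpu]
    linear_combination (norm := noncomm_ring)
      -(a * hcomm * (u * u)) + haidem * ((u * u) * (u * u)) + a * hu4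
  · rw [hpu]
    linear_combination (norm := noncomm_ring) -(a * hcomm) + haidem * (u * u)
  · rw [hpu]
    linear_combination (norm := noncomm_ring) haidem * (u * u)
  · rw [hpu]
    linear_combination (norm := noncomm_ring) h1 * (u * u) + hu3
  · rw [hpu]
    linear_combination (norm := noncomm_ring) 2 * (a * hu4) - hcomm * (u * u)
  · intro hu hp0
    have hz : a * (u * u) = 0 := by rw [← hpu]; exact hp0
    exact hu (by linear_combination (norm := noncomm_ring) u * hz - huau * u - hu3 + hz * u)
end

section
/- Let a ∈ L(H) be a projection and let u, v be self-adjoint tripotents with au + ua = u, av + va = v, and uv = 0 (so also vu = 0). Set p := ½(au² + u²a) and q := ½(av² + v²a). Then pq = qp = 0 (the projections p and q are orthogonal), and pv = vp = 0 and uq = qu = 0. -/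
variable {H : Type*} [NormedAddCommGroup H] [InnerProductSpace ℂ H] [CompleteSpace H]

/-- Let `a ∈ L(H)` be a projection and `u, v` self-adjoint tripotents
with `au + ua = u`, `av + va = v` and `uv = 0` (hence also `vu = 0`).  Then the
projections `p := ½(au² + u²a)` and `q := ½(av² + v²a)` are orthogonal (`pq = qp = 0`),
and moreover `pv = vp = 0` and `uq = qu = 0`. -/
theorem orthogonal_tripotents_support_projections (a u v : H →L[ℂ] H)
    (hasa : IsSelfAdjoint a) (haidem : a * a = a)
    (husa : IsSelfAdjoint u) (hu3 : u * u * u = u)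
    (hvsa : IsSelfAdjoint v) (hv3 : v * v * v = v)
    (h1 : a * u + u * a = u) (h2 : a * v + v * a = v)
    (huv : u * v = 0) (hvu : v * u = 0)
    (p q : H →L[ℂ] H)
    (hp : p = (1 / 2 : ℝ) • (a * (u * u) + (u * u) * a))
    (hq : q = (1 / 2 : ℝ) • (a * (v * v) + (v * v) * a)) :
    p * q = 0 ∧ q * p = 0 ∧ p * v = 0 ∧ v * p = 0 ∧ u * q = 0 ∧ q * u = 0 := by
  -- a commutes with u*u
  have e1 : a * u * u + u * a * u = u * u := by
    have := congrArg (· * u) h1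
    simpa only [add_mul] using this
  have e2 : u * a * u + u * u * a = u * u := by
    have := congrArg (u * ·) h1
    simpa only [mul_add, ← mul_assoc] using this
  have hA : a * (u * u) = u * u * a := by
    have h3 : a * u * u = u * u - u * a * u := eq_sub_of_add_eq e1
    have h4 : u * u * a = u * u - u * a * u := eq_sub_of_add_eq' e2
    rw [← mul_assoc, h3, h4]
  -- a commutes with v*v
  have f1 : a * v * v + v * a * v = v * v := by
    have := congrArg (· * v) h2
    simpa only [add_mul] using this
  have f2 : v * a * v + v * v * a = v * v := by
    have := congrArg (v * ·) h2
    simpa only [mul_add, ← mul_assoc] using this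
  have hB : a * (v * v) = v * v * a := by
    have h3 : a * v * v = v * v - v * a * v := eq_sub_of_add_eq f1
    have h4 : v * v * a = v * v - v * a * v := eq_sub_of_add_eq' f2
    rw [← mul_assoc, h3, h4]
  have hpa : p = a * (u * u) := by
    rw [hp, ← hA, ← two_smul ℝ (a * (u * u)), smul_smul]
    norm_num
  have hpa' : p = (u * u) * a := by rw [hpa, hA]
  have hqa : q = a * (v * v) := by
    rw [hq, ← hB, ← two_smul ℝ (a * (v * v)), smul_smul]
    norm_num
  have hqa' : q = (v * v) * a := by rw [hqa, hB]
  have huv' : ∀ x : H →L[ℂ] H, u * (v * x) = 0 := fun x => by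
    rw [← mul_assoc, huv, zero_mul]
  have hvu' : ∀ x : H →L[ℂ] H, v * (u * x) = 0 := fun x => by
    rw [← mul_assoc, hvu, zero_mul]
  refine ⟨?_, ?_, ?_, ?_, ?_, ?_⟩
  · rw [hpa, hqa']; simp [mul_assoc, huv']
  · rw [hqa, hpa']; simp [mul_assoc, hvu']
  · rw [hpa]; simp [mul_assoc, huv]
  · rw [hpa']; simp [hvu', ← mul_assoc, hvu]
  · rw [hqa']; simp [huv', ← mul_assoc, huv]
  · rw [hqa]; simp [mul_assoc, hvu]
end

section
/- Let s ∈ ℕ and let a₀, a₁, …, a_s ∈ L(H) be pairwise orthogonal projections (a_i a_j = 0 for i ≠ j) with a = a₀ + a₁ + ⋯ + a_s. Let u₁, …, u_s ∈ L(H) be self-adjoint with a_k u_k + u_k a_k = u_k for each k, u_j u_k = 0 for j ≠ k, and a_j u_k = u_k a_j = 0 whenever j ≠ k (including j = 0), and set u := u₁ + ⋯ + u_s. Then for every t ∈ ℝ, exp(t·G(a,u)) applied to a equals a₀ + Σ_{k=1}^{s} exp(t·G(a_k,u_k)) applied to a_k. -/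
variable {H : Type*} [NormedAddCommGroup H] [InnerProductSpace ℂ H] [CompleteSpace H]

/-!
With `Dₖ := uₖaₖ - aₖuₖ` the orthogonality relations give `ua - au = ∑ₖ Dₖ`, so `G(a,u)` is the
inner derivation `ad (∑ₖ Dₖ) = ∑ₖ ad Dₖ` and `G(aₖ,uₖ) = ad Dₖ`. The `Dₖ` are mutually orthogonal,
so the `ad Dₖ` commute; moreover `ad Dⱼ` annihilates `a₀` and every `aₖ` with `k ≠ j`. Hence
`exp(t ∑ⱼ ad Dⱼ) aₖ = exp(t ad Dₖ) (exp(t ∑_{j ≠ k} ad Dⱼ) aₖ) = exp(t ad Dₖ) aₖ`,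
while `a₀` is fixed.
-/

open NormedSpace

section Orthogonality

variable {R : Type*}

theorem commutator_mul_eq_zero [Ring R] {a b c : R} (ha : a * c = 0) (hb : b * c = 0) :
    (a * b - b * a) * c = 0 := by
  rw [sub_mul, mul_assoc, mul_assoc, hb, ha, mul_zero, mul_zero, sub_zero]

theorem mul_commutator_eq_zero [Ring R] {a b c : R} (ha : c * a = 0) (hb : c * b = 0) :
    c * (a * b - b * a) = 0 := by
  rw [mul_sub, ← mul_assoc, ← mul_assoc, ha, hb, zero_mul, zero_mul, sub_zero]

theorem Finset.sum_mul_sum_of_pairwise_mul_eq_zero {ι : Type*} [NonUnitalNonAssocSemiring R]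
    (s : Finset ι) (f g : ι → R) (h : Pairwise fun i j => f i * g j = 0) :
    (∑ i ∈ s, f i) * ∑ i ∈ s, g i = ∑ i ∈ s, f i * g i := by
  rw [Finset.sum_mul_sum]
  exact Finset.sum_congr rfl fun i hi => Finset.sum_eq_single_of_mem i hi fun j _ hji => h hji.symm

end Orthogonality

section Exponential

variable {𝕜 E : Type*} [RCLike 𝕜] [NormedAddCommGroup E] [NormedSpace 𝕜 E] [CompleteSpace E]

theorem exp_apply_of_apply_eq_zero {f : E →L[𝕜] E} {x : E} (hx : f x = 0) : exp f x = x := by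
  have hsum := (ContinuousLinearMap.apply 𝕜 E x).hasSum (exp_series_hasSum_exp' (𝕂 := 𝕜) f)
  refine hsum.unique ?_
  convert hasSum_ite_eq 0 x with n
  rcases n with _ | n
  · simp
  · simp [pow_succ, hx]

/-- `NormedSpace.exp_add_of_commute` needs a `NormedAlgebra ℚ` instance, which `E →L[𝕜] E` lacks. -/
theorem ContinuousLinearMap.exp_add_of_commute {f g : E →L[𝕜] E} (hfg : Commute f g) :
    exp (f + g) = exp f * exp g :=
  exp_add_of_commute_of_mem_ball (𝕂 := 𝕜) hfg
    ((expSeries_radius_eq_top 𝕜 (E →L[𝕜] E)).symm ▸ edist_lt_top _ _)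
    ((expSeries_radius_eq_top 𝕜 (E →L[𝕜] E)).symm ▸ edist_lt_top _ _)

theorem exp_sum_apply_of_apply_eq_zero {ι : Type*} [DecidableEq ι] {s : Finset ι}
    {f : ι → E →L[𝕜] E} (hf : (s : Set ι).Pairwise fun i j => Commute (f i) (f j))
    {j : ι} (hj : j ∈ s) {x : E} (hx : ∀ i ∈ s, i ≠ j → f i x = 0) :
    exp (∑ i ∈ s, f i) x = exp (f j) x := by
  have hcomm : Commute (f j) (∑ i ∈ s.erase j, f i) :=
    Commute.sum_right _ _ _ fun i hi =>
      hf hj (Finset.mem_of_mem_erase hi) (Finset.ne_of_mem_erase hi).symm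
  have hrest : (∑ i ∈ s.erase j, f i) x = 0 := by
    rw [sum_apply]
    exact Finset.sum_eq_zero fun i hi =>
      hx i (Finset.mem_of_mem_erase hi) (Finset.ne_of_mem_erase hi)
  rw [← Finset.add_sum_erase s f hj, ContinuousLinearMap.exp_add_of_commute hcomm,
    mul_apply_eq_comp, exp_apply_of_apply_eq_zero hrest]

theorem exp_sum_apply_add_sum {ι : Type*} [Fintype ι] {f : ι → E →L[𝕜] E}
    (hf : Pairwise fun i j => Commute (f i) (f j)) {x₀ : E} (hx₀ : ∀ i, f i x₀ = 0) {x : ι → E}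
    (hx : ∀ i j, i ≠ j → f i (x j) = 0) :
    exp (∑ i, f i) (x₀ + ∑ j, x j) = x₀ + ∑ j, exp (f j) (x j) := by
  classical
  have hsum₀ : (∑ i, f i) x₀ = 0 := by
    rw [sum_apply]
    exact Finset.sum_eq_zero fun i _ => hx₀ i
  rw [map_add, exp_apply_of_apply_eq_zero hsum₀, map_sum]
  congr 1
  exact Finset.sum_congr rfl fun j hj =>
    exp_sum_apply_of_apply_eq_zero (fun i _ k _ hik => hf hik) hj fun i _ hij => hx i j hij

end Exponential

namespace ContinuousLinearMap

variable (𝕜 M : Type*) [NontriviallyNormedField 𝕜] [NormedRing M] [NormedAlgebra 𝕜 M]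

noncomputable def ad : M →L[𝕜] M →L[𝕜] M :=
  ContinuousLinearMap.mul 𝕜 M - (ContinuousLinearMap.mul 𝕜 M).flip

variable {𝕜 M}

@[simp]
theorem ad_apply_apply (D z : M) : ad 𝕜 M D z = D * z - z * D := rfl

theorem commute_ad_of_mul_eq_zero {D E : M} (hDE : D * E = 0) (hED : E * D = 0) :
    Commute (ad 𝕜 M D) (ad 𝕜 M E) := by
  ext z
  simp only [mul_apply_eq_comp, ad_apply_apply, mul_sub, sub_mul, ← mul_assoc, hDE, hED,
    zero_mul]
  simp only [mul_assoc, hDE, hED, mul_zero]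
  abel

theorem ad_apply_eq_zero {D x : M} (hDx : D * x = 0) (hxD : x * D = 0) : ad 𝕜 M D x = 0 := by
  rw [ad_apply_apply, hDx, hxD, sub_zero]

end ContinuousLinearMap

open ContinuousLinearMap in
theorem exp_smul_ad_sum_apply {𝕜 M ι : Type*} [RCLike 𝕜] [NormedRing M] [NormedAlgebra 𝕜 M]
    [CompleteSpace M] [Fintype ι] (D x : ι → M) (x₀ : M)
    (hDD : Pairwise fun i j => D i * D j = 0)
    (hDx : ∀ i j, i ≠ j → D i * x j = 0 ∧ x j * D i = 0)
    (hDx₀ : ∀ i, D i * x₀ = 0 ∧ x₀ * D i = 0) (t : 𝕜) :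
    exp (t • ad 𝕜 M (∑ i, D i)) (x₀ + ∑ i, x i) = x₀ + ∑ i, exp (t • ad 𝕜 M (D i)) (x i) := by
  rw [map_sum, Finset.smul_sum]
  refine exp_sum_apply_add_sum (fun i j hij => ?_) (fun i => ?_) (fun i j hij => ?_)
  · dsimp only
    rw [← map_smul, ← map_smul]
    exact commute_ad_of_mul_eq_zero (by rw [smul_mul_smul_comm, hDD hij, smul_zero])
      (by rw [smul_mul_smul_comm, hDD hij.symm, smul_zero])
  · rw [smul_apply, ad_apply_eq_zero (hDx₀ i).1 (hDx₀ i).2, smul_zero]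
  · rw [smul_apply, ad_apply_eq_zero (hDx i j hij).1 (hDx i j hij).2, smul_zero]

theorem G_eq_ad (a u : H →L[ℂ] H) :
    G a u = ContinuousLinearMap.ad ℝ (H →L[ℂ] H) (u * a - a * u) :=
  rfl

theorem exp_G_orthogonal_sum_general (s : ℕ) (a₀ : H →L[ℂ] H) (A U : Fin s → H →L[ℂ] H)
    (a u : H →L[ℂ] H)
    (hAorth : ∀ j k, j ≠ k → A j * A k = 0)
    (hA0orth : ∀ k, a₀ * A k = 0 ∧ A k * a₀ = 0)
    (ha : a = a₀ + ∑ k, A k)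
    (hUU : ∀ j k, j ≠ k → U j * U k = 0)
    (hAU' : ∀ j k, j ≠ k → A j * U k = 0 ∧ U k * A j = 0)
    (h0U : ∀ k, a₀ * U k = 0 ∧ U k * a₀ = 0)
    (hu : u = ∑ k, U k) :
    ∀ t : ℝ, NormedSpace.exp (t • G a u) a =
      a₀ + ∑ k, NormedSpace.exp (t • G (A k) (U k)) (A k) := by
  intro t
  set D : Fin s → H →L[ℂ] H := fun k => U k * A k - A k * U k
  have hua : u * a = ∑ k, U k * A k := by
    rw [hu, ha, mul_add, Finset.sum_mul, Finset.sum_eq_zero fun k _ => (h0U k).2, zero_add,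
      Finset.sum_mul_sum_of_pairwise_mul_eq_zero _ _ _ fun j k h => (hAU' k j h.symm).2]
  have hau : a * u = ∑ k, A k * U k := by
    rw [hu, ha, add_mul, Finset.mul_sum, Finset.sum_eq_zero fun k _ => (h0U k).1, zero_add,
      Finset.sum_mul_sum_of_pairwise_mul_eq_zero _ _ _ fun j k h => (hAU' j k h).1]
  have hDA : ∀ j k, j ≠ k → D j * A k = 0 ∧ A k * D j = 0 := fun j k h =>
    ⟨commutator_mul_eq_zero (hAU' k j h.symm).2 (hAorth j k h),
      mul_commutator_eq_zero (hAU' k j h.symm).1 (hAorth k j h.symm)⟩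
  have hDa₀ : ∀ k, D k * a₀ = 0 ∧ a₀ * D k = 0 := fun k =>
    ⟨commutator_mul_eq_zero (h0U k).2 (hA0orth k).2,
      mul_commutator_eq_zero (h0U k).1 (hA0orth k).1⟩
  have hDD : Pairwise fun j k => D j * D k = 0 := fun j k h =>
    mul_commutator_eq_zero (commutator_mul_eq_zero (hUU j k h) (hAU' j k h).1) (hDA j k h).1
  rw [G_eq_ad, hua, hau, ← Finset.sum_sub_distrib, ha]
  exact exp_smul_ad_sum_apply D A a₀ hDD hDA hDa₀ t

/-- Let `a₀, a₁, …, aₛ` be pairwise orthogonal projections with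
`a = a₀ + a₁ + ⋯ + aₛ`, and let `u₁, …, uₛ` be self-adjoint with `aₖuₖ + uₖaₖ = uₖ`,
`uⱼuₖ = 0` for `j ≠ k` and `aⱼuₖ = uₖaⱼ = 0` for `j ≠ k` (including `j = 0`).  With
`u := u₁ + ⋯ + uₛ`, for every `t ∈ ℝ`,
`exp(t·G(a,u)) a = a₀ + ∑ₖ exp(t·G(aₖ,uₖ)) aₖ`. -/
theorem exp_G_orthogonal_sum (s : ℕ) (a₀ : H →L[ℂ] H) (A U : Fin s → H →L[ℂ] H)
    (a u : H →L[ℂ] H)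
    (h0sa : IsSelfAdjoint a₀) (h0idem : a₀ * a₀ = a₀)
    (hAsa : ∀ k, IsSelfAdjoint (A k)) (hAidem : ∀ k, A k * A k = A k)
    (hAorth : ∀ j k, j ≠ k → A j * A k = 0)
    (hA0orth : ∀ k, a₀ * A k = 0 ∧ A k * a₀ = 0)
    (ha : a = a₀ + ∑ k, A k)
    (hUsa : ∀ k, IsSelfAdjoint (U k))
    (hAU : ∀ k, A k * U k + U k * A k = U k)
    (hUU : ∀ j k, j ≠ k → U j * U k = 0)
    (hAU' : ∀ j k, j ≠ k → A j * U k = 0 ∧ U k * A j = 0)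
    (h0U : ∀ k, a₀ * U k = 0 ∧ U k * a₀ = 0)
    (hu : u = ∑ k, U k) :
    ∀ t : ℝ, NormedSpace.exp (t • G a u) a =
      a₀ + ∑ k, NormedSpace.exp (t • G (A k) (U k)) (A k) :=
  exp_G_orthogonal_sum_general s a₀ A U a u hAorth hA0orth ha hUU hAU' h0U hu
end

section
/- Let a, b ∈ L(H) be nonzero projections and let λ, μ ∈ ℝ satisfy aba = λ·a and bab = μ·b. Then λ = μ and 0 ≤ λ ≤ 1. Moreover λ = 0 if and only if ab = 0, and λ = 1 if and only if a = b. -/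
/-!
For projections `a`, `b` in a C⋆-algebra, `a * b * a = star (b * a) * (b * a)`.
So `l • a = a * b * a` is positive, `|l| = ‖a * b * a‖ ≤ 1`, and by the C⋆-identity
`l = 0` iff `b * a = 0`. Similarly
`star (a - b * a) * (a - b * a) = a - a * b * a`, so `a * b * a = a` forces `b * a = a`;
together with `b * a * b = b` this gives `a = b * a = star (b * a) = a * b = b`.
-/

namespace IsStarProjection

section StarRing

variable {A : Type*} [NonUnitalRing A] [StarRing A] {a b : A}

theorem mul_mul_eq_star_mul_self (hb : IsStarProjection b) (ha : IsSelfAdjoint a) :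
    a * b * a = star (b * a) * (b * a) := by
  rw [star_mul, ha.star_eq, hb.isSelfAdjoint.star_eq, ← mul_assoc, mul_assoc a b b,
    hb.isIdempotentElem.eq]

theorem nonneg_of_mul_mul_eq_smul [PartialOrder A] [StarOrderedRing A] [Module ℝ A]
    [StarModule ℝ A] [IsScalarTower ℝ A A] [SMulCommClass ℝ A A] [Module.IsTorsionFree ℝ A]
    {l : ℝ} (ha : IsStarProjection a) (hb : IsStarProjection b) (ha0 : a ≠ 0)
    (h : a * b * a = l • a) : 0 ≤ l := by
  have hla : 0 ≤ l • a :=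
    h ▸ hb.mul_mul_eq_star_mul_self ha.isSelfAdjoint ▸ star_mul_self_nonneg _
  by_contra! hl
  have : l • a = 0 := le_antisymm (smul_nonpos_of_nonpos_of_nonneg hl.le ha.nonneg) hla
  exact hl.ne ((smul_eq_zero_iff_left ha0).mp this)

end StarRing

section CStarRing

variable {A : Type*} [NonUnitalNormedRing A] [StarRing A] [CStarRing A] {a b : A}

theorem norm_eq_one (ha : IsStarProjection a) (ha0 : a ≠ 0) : ‖a‖ = 1 := by
  have h := CStarRing.norm_star_mul_self (x := a)
  rw [ha.isSelfAdjoint.star_eq, ha.isIdempotentElem.eq] at h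
  exact (mul_right_eq_self₀.mp h.symm).resolve_right (norm_ne_zero_iff.mpr ha0)

theorem mul_mul_eq_zero_iff (hb : IsStarProjection b) (ha : IsSelfAdjoint a) :
    a * b * a = 0 ↔ a * b = 0 := by
  rw [hb.mul_mul_eq_star_mul_self ha, CStarRing.star_mul_self_eq_zero_iff, ← star_eq_zero,
    star_mul, ha.star_eq, hb.isSelfAdjoint.star_eq]

theorem mul_eq_of_mul_mul_eq (ha : IsStarProjection a) (hb : IsStarProjection b)
    (h : a * b * a = a) : b * a = a := by
  have key : star (a - b * a) * (a - b * a) = a - a * b * a := by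
    rw [star_sub, star_mul, ha.isSelfAdjoint.star_eq, hb.isSelfAdjoint.star_eq]
    calc (a - a * b) * (a - b * a) = a * a - a * b * a - a * b * a + a * (b * b) * a := by
          noncomm_ring
      _ = a - a * b * a := by rw [ha.isIdempotentElem.eq, hb.isIdempotentElem.eq, h]; abel
  rw [h, sub_self, CStarRing.star_mul_self_eq_zero_iff, sub_eq_zero] at key
  exact key.symm

theorem eq_of_mul_mul_eq (ha : IsStarProjection a) (hb : IsStarProjection b)
    (hab : a * b * a = a) (hba : b * a * b = b) : a = b := by
  calc a = star (b * a) := by rw [ha.mul_eq_of_mul_mul_eq hb hab, ha.isSelfAdjoint.star_eq]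
    _ = a * b := by rw [star_mul, ha.isSelfAdjoint.star_eq, hb.isSelfAdjoint.star_eq]
    _ = b := hb.mul_eq_of_mul_mul_eq ha hba

variable [NormedSpace ℝ A] {l m : ℝ}

theorem eq_zero_iff_mul_eq_zero_of_mul_mul_eq_smul (ha : IsStarProjection a)
    (hb : IsStarProjection b) (ha0 : a ≠ 0) (h : a * b * a = l • a) : l = 0 ↔ a * b = 0 := by
  rw [← hb.mul_mul_eq_zero_iff ha.isSelfAdjoint, h, smul_eq_zero_iff_left ha0]

theorem eq_of_mul_mul_eq_smul [IsScalarTower ℝ A A] [SMulCommClass ℝ A A]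
    (ha : IsStarProjection a) (hb : IsStarProjection b) (ha0 : a ≠ 0) (hb0 : b ≠ 0)
    (hl : a * b * a = l • a) (hm : b * a * b = m • b) : l = m := by
  by_cases hab : a * b = 0
  · have hba : b * a = 0 := by
      rw [← star_eq_zero, star_mul, ha.isSelfAdjoint.star_eq, hb.isSelfAdjoint.star_eq, hab]
    rw [(ha.eq_zero_iff_mul_eq_zero_of_mul_mul_eq_smul hb ha0 hl).mpr hab,
      (hb.eq_zero_iff_mul_eq_zero_of_mul_mul_eq_smul ha hb0 hm).mpr hba]
  · refine smul_left_injective ℝ hab ?_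
    calc l • (a * b) = a * b * a * b := by rw [hl, smul_mul_assoc]
      _ = a * (b * a * b) := by noncomm_ring
      _ = m • (a * b) := by rw [hm, mul_smul_comm]

theorem abs_le_one_of_mul_mul_eq_smul (ha : IsStarProjection a) (hb : IsStarProjection b)
    (ha0 : a ≠ 0) (h : a * b * a = l • a) : |l| ≤ 1 :=
  calc |l| = ‖l • a‖ := by rw [norm_smul, ha.norm_eq_one ha0, Real.norm_eq_abs, mul_one]
    _ = ‖a * b * a‖ := by rw [h]
    _ ≤ ‖a‖ * ‖b‖ * ‖a‖ := norm_mul₃_le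
    _ ≤ 1 := by rw [ha.norm_eq_one ha0, one_mul, mul_one]; exact IsStarProjection.norm_le b hb

theorem eq_one_iff_eq_of_mul_mul_eq_smul (ha : IsStarProjection a) (hb : IsStarProjection b)
    (ha0 : a ≠ 0) (hab : a * b * a = l • a) (hba : b * a * b = l • b) : l = 1 ↔ a = b := by
  constructor
  · rintro rfl
    exact ha.eq_of_mul_mul_eq hb (by rwa [one_smul] at hab) (by rwa [one_smul] at hba)
  · rintro rfl
    rw [ha.isIdempotentElem.eq, ha.isIdempotentElem.eq] at hab
    exact smul_left_injective ℝ ha0 (hab.symm.trans (one_smul ℝ a).symm)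

end CStarRing

end IsStarProjection

variable {H : Type*} [NormedAddCommGroup H] [InnerProductSpace ℂ H] [CompleteSpace H]

/-- Let `a, b ∈ L(H)` be nonzero projections with `aba = λ·a` and
`bab = μ·b` for real numbers `λ, μ`.  Then `λ = μ`, `0 ≤ λ ≤ 1`, `λ = 0 ↔ ab = 0`
and `λ = 1 ↔ a = b`. -/
theorem projection_pair_spectral_parameter (a b : H →L[ℂ] H) (l m : ℝ)
    (hasa : IsSelfAdjoint a) (haidem : a * a = a) (ha0 : a ≠ 0)
    (hbsa : IsSelfAdjoint b) (hbidem : b * b = b) (hb0 : b ≠ 0)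
    (haba : a * b * a = l • a) (hbab : b * a * b = m • b) :
    l = m ∧ 0 ≤ l ∧ l ≤ 1 ∧ (l = 0 ↔ a * b = 0) ∧ (l = 1 ↔ a = b) := by
  have ha : IsStarProjection a := ⟨haidem, hasa⟩
  have hb : IsStarProjection b := ⟨hbidem, hbsa⟩
  obtain rfl : l = m := ha.eq_of_mul_mul_eq_smul hb ha0 hb0 haba hbab
  exact ⟨rfl, ha.nonneg_of_mul_mul_eq_smul hb ha0 haba,
    (abs_le.mp (ha.abs_le_one_of_mul_mul_eq_smul hb ha0 haba)).2,
    ha.eq_zero_iff_mul_eq_zero_of_mul_mul_eq_smul hb ha0 haba,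
    ha.eq_one_iff_eq_of_mul_mul_eq_smul hb ha0 haba hbab⟩
end

section
/- Let a, b ∈ L(H) be projections of the same finite rank r, and suppose that aba is invertible in the unital algebra aL(H)a with unit a, i.e. there exists y ∈ L(H) with y = aya and (aba)y = y(aba) = a. Then there exists a self-adjoint u ∈ L(H) with au + ua = u such that exp(G(a,u)) applied to a equals b. -/
/-!
Put `s = 2a - 1` and `t = 2b - 1`. Because `a` and `b` have the same finite rank and `aba` is
invertible in `aL(H)a`, the operator `a + b - 1` is injective, and its square `1 - (a - b)²` is a
finite-rank perturbation of the identity; hence `a + b - 1` is invertible. So is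
`1 + ts = 2(a + b - 1)s`, i.e. `-1` is not in the spectrum of the unitary `ts`, and the principal
logarithm gives a skew-adjoint `w = ½ log(ts)`. Conjugation by `s` sends `ts` to `st = (ts)*`, hence
`w` to `-w`, so `exp w · s · exp(-w) = exp(2w) s = t`, that is `exp w · a · exp(-w) = b`. Finally
`u = wa - aw` is self-adjoint with `au + ua = u` and `ua - au = w`, and `exp(G(a,u))` is
conjugation by `exp w`.
-/

variable {H : Type*} [NormedAddCommGroup H] [InnerProductSpace ℂ H] [CompleteSpace H]

open LinearMap Module

namespace Module.End

variable {K V : Type*} [DivisionRing K] [AddCommGroup V] [Module K V]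

theorem surjective_one_sub_of_injective {e : End K V} [FiniteDimensional K (range e)]
    (he : Function.Injective ⇑(1 - e)) : Function.Surjective ⇑(1 - e) := by
  have hmaps : ∀ x ∈ range e, (1 - e) x ∈ range e :=
    fun x hx => sub_mem hx (mem_range_self e x)
  have hsurj : Function.Surjective ((1 - e).restrict hmaps) :=
    injective_iff_surjective.mp fun x y hxy => Subtype.ext (he congr(($hxy : V)))
  intro z
  obtain ⟨k, hk⟩ := hsurj ⟨e z, mem_range_self e z⟩
  refine ⟨z + k, ?_⟩
  have hk' : (k : V) - e k = e z := congr(($hk : V))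
  simp only [LinearMap.sub_apply, Module.End.one_apply, map_add] at hk' ⊢
  rw [hk', sub_add_cancel]

variable {a b : End K V}

theorem eq_zero_of_mem_range_of_apply_eq_zero [FiniteDimensional K (range a)]
    [FiniteDimensional K (range b)] (hrank : finrank K (range a) = finrank K (range b))
    {y : End K V} (hy : a * b * a * y = a) {x : V} (hx : x ∈ range b) (hax : a x = 0) :
    x = 0 := by
  have hmaps : ∀ x ∈ range b, a x ∈ range a := fun x _ => mem_range_self a x
  have hsurj : Function.Surjective (a.restrict hmaps) := by
    rintro ⟨_, z, rfl⟩
    exact ⟨⟨b (a (y z)), mem_range_self b _⟩, Subtype.ext congr($hy z)⟩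
  have hinj := (injective_iff_surjective_of_finrank_eq_finrank hrank.symm).mpr hsurj
  exact congr(($(@hinj ⟨x, hx⟩ 0 (Subtype.ext (by simpa using hax))) : V))

theorem bijective_add_sub_one (ha : IsIdempotentElem a) (hb : IsIdempotentElem b)
    [FiniteDimensional K (range a)] [FiniteDimensional K (range b)]
    (hrank : finrank K (range a) = finrank K (range b)) {y y' : End K V}
    (hy : a * b * a * y = a) (hy' : y' * (a * b * a) = a) : Function.Bijective ⇑(a + b - 1) := by
  have hinj : Function.Injective ⇑(a + b - 1) := by
    rw [← ker_eq_bot, Submodule.eq_bot_iff]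
    intro x (hx : a x + b x - x = 0)
    have hbx : b x = 0 := by
      refine eq_zero_of_mem_range_of_apply_eq_zero hrank hy (mem_range_self b x) ?_
      simpa [← Module.End.mul_apply, ha.eq] using congr(a $hx)
    have hax : a x = x := by simpa [hbx, sub_eq_zero] using hx
    simpa [hax, hbx] using congr($hy' x).symm
  have hsq : (a + b - 1) * (a + b - 1) = 1 - (a - b) * (a - b) := by
    simp only [mul_sub, sub_mul, mul_add, add_mul, mul_one, one_mul, ha.eq, hb.eq]
    abel
  have hfin : FiniteDimensional K (range ((a - b) * (a - b))) := by
    refine Submodule.finiteDimensional_of_le (S₂ := range a ⊔ range b) ?_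
    rintro _ ⟨x, rfl⟩
    simp only [Module.End.mul_apply, LinearMap.sub_apply]
    exact sub_mem (Submodule.mem_sup_left (mem_range_self a _))
      (Submodule.mem_sup_right (mem_range_self b _))
  refine ⟨hinj, fun z => ?_⟩
  have hsq_inj : Function.Injective ⇑(1 - (a - b) * (a - b)) := by
    rw [← hsq]; exact hinj.comp hinj
  obtain ⟨x, rfl⟩ := surjective_one_sub_of_injective hsq_inj z
  exact ⟨(a + b - 1) x, by rw [← hsq]; rfl⟩

end Module.End

theorem ContinuousLinearMap.isUnit_add_sub_one {𝕜 E : Type*} [NontriviallyNormedField 𝕜]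
    [NormedAddCommGroup E] [NormedSpace 𝕜 E] [CompleteSpace E] {a b : E →L[𝕜] E}
    (ha : IsIdempotentElem a) (hb : IsIdempotentElem b)
    [FiniteDimensional 𝕜 (range (a : E →ₗ[𝕜] E))] [FiniteDimensional 𝕜 (range (b : E →ₗ[𝕜] E))]
    (hrank : finrank 𝕜 (range (a : E →ₗ[𝕜] E)) = finrank 𝕜 (range (b : E →ₗ[𝕜] E)))
    {y y' : E →L[𝕜] E} (hy : a * b * a * y = a) (hy' : y' * (a * b * a) = a) :
    IsUnit (a + b - 1) := by
  let toLin := ContinuousLinearMap.toLinearMapRingHom (R₁ := 𝕜) (M₁ := E)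
  rw [isUnit_iff_bijective]
  exact Module.End.bijective_add_sub_one (ha.map toLin) (hb.map toLin) hrank
    (by simpa [toLin] using congr(toLin $hy)) (by simpa [toLin] using congr(toLin $hy'))

open NormedSpace
open Complex (log slitPlane)

theorem Complex.mem_slitPlane_of_norm_eq_one {z : ℂ} (hz : ‖z‖ = 1) (hz' : z ≠ -1) :
    z ∈ slitPlane := by
  rw [mem_slitPlane_iff_arg]
  refine ⟨fun harg => hz' ?_, by rintro rfl; simp at hz⟩
  rw [← norm_mul_exp_arg_mul_I z, hz, harg, exp_pi_mul_I, ofReal_one, one_mul]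

section CStarAlgebra

variable {A : Type*} [CStarAlgebra A]

theorem exp_cfc_log {v : A} [IsStarNormal v] (hv : spectrum ℂ v ⊆ slitPlane) :
    exp (cfc log v) = v := by
  have hlog : ContinuousOn log (spectrum ℂ v) :=
    fun z hz => (continuousAt_clog (hv hz)).continuousWithinAt
  rw [← CFC.complex_exp_eq_normedSpace_exp, ← cfc_comp' Complex.exp log v]
  conv_rhs => rw [← cfc_id' ℂ v]
  exact cfc_congr fun z hz => Complex.exp_log (Complex.slitPlane_ne_zero (hv hz))

theorem cfc_log_star {v : A} [IsStarNormal v] (hv : spectrum ℂ v ⊆ slitPlane) :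
    cfc log (star v) = star (cfc log v) := by
  have hlog : ContinuousOn log ((star ·) '' spectrum ℂ v) := by
    rintro _ ⟨z, hz, rfl⟩
    refine (continuousAt_clog ?_).continuousWithinAt
    simpa [Complex.mem_slitPlane_iff] using hv hz
  rw [← cfc_star_id (R := ℂ) v, ← cfc_comp' log (star ·) v, ← cfc_star]
  exact cfc_congr fun z hz => Complex.log_conj z (Complex.slitPlane_arg_ne_pi (hv hz))

theorem star_cfc_log_of_mem_unitary {v : A} (hv : v ∈ unitary A) :
    star (cfc log v) = -cfc log v := by
  rw [← cfc_star, ← cfc_neg]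
  refine cfc_congr fun z hz => ?_
  have hz : ‖z‖ = 1 := by simpa using spectrum.subset_circle_of_unitary hv hz
  apply Complex.ext <;> simp [Complex.log_re, hz]

theorem cfc_unitary_conj {u : A} (hu : u ∈ unitary A) (f : ℂ → ℂ) (v : A) [IsStarNormal v]
    (hf : ContinuousOn f (spectrum ℂ v) := by cfc_cont_tac) :
    cfc f (u * v * star u) = u * cfc f v * star u :=
  ((Unitary.conjStarAlgAut ℂ A ⟨u, hu⟩ : A →⋆ₐ[ℂ] A).map_cfc f v hf
    ((continuous_const.mul continuous_id).mul continuous_const)).symm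

theorem exists_skewAdjoint_exp_conj_eq_of_involutive {s t : A} (hs : IsSelfAdjoint s)
    (hs2 : s * s = 1) (ht : IsSelfAdjoint t) (ht2 : t * t = 1) (hts : IsUnit (t * s + 1)) :
    ∃ w : A, star w = -w ∧ s * w * s = -w ∧ exp w * s * exp (-w) = t := by
  let +nondep : NormedAlgebra ℚ A := .restrictScalars ℚ ℂ A
  have hsu : s ∈ unitary A := ⟨by rw [hs.star_eq, hs2], by rw [hs.star_eq, hs2]⟩
  have htu : t ∈ unitary A := ⟨by rw [ht.star_eq, ht2], by rw [ht.star_eq, ht2]⟩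
  have hvu : t * s ∈ unitary A := mul_mem htu hsu
  have := isStarNormal_of_mem_unitary hvu
  have hspec : spectrum ℂ (t * s) ⊆ slitPlane := by
    intro z hz
    refine Complex.mem_slitPlane_of_norm_eq_one ?_ ?_
    · simpa using spectrum.subset_circle_of_unitary hvu hz
    · rintro rfl
      refine spectrum.notMem_iff.mpr ?_ hz
      convert hts.neg using 1
      rw [map_neg, map_one]
      abel
  have hconj : s * (t * s) * star s = star (t * s) := by
    rw [hs.star_eq, star_mul, hs.star_eq, ht.star_eq, mul_assoc, mul_assoc, hs2, mul_one]
  set w₀ := cfc log (t * s)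
  have hw₀ : star w₀ = -w₀ := star_cfc_log_of_mem_unitary hvu
  have hlog : ContinuousOn log (spectrum ℂ (t * s)) :=
    fun z hz => (continuousAt_clog (hspec hz)).continuousWithinAt
  have hsw₀ : s * w₀ * s = -w₀ := by
    calc s * w₀ * s = s * w₀ * star s := by rw [hs.star_eq]
      _ = cfc log (star (t * s)) := by rw [← cfc_unitary_conj hsu log (t * s) hlog, hconj]
      _ = -w₀ := by rw [cfc_log_star hspec, hw₀]
  set w := (2⁻¹ : ℂ) • w₀
  have hsw : s * w * s = -w := by rw [mul_smul_comm, smul_mul_assoc, hsw₀, smul_neg]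
  have hww : w + w = w₀ := by rw [← two_smul ℂ, smul_smul]; norm_num
  have hsemi : SemiconjBy s (-w) w := by
    rw [SemiconjBy, ← hsw, ← mul_assoc, ← mul_assoc, hs2, one_mul]
  refine ⟨w, by simp [w, star_smul, hw₀], hsw, ?_⟩
  rw [mul_assoc, hsemi.exp_right.eq, ← mul_assoc, ← exp_add_of_commute (Commute.refl w), hww,
    exp_cfc_log hspec, mul_assoc, hs2, mul_one]

theorem IsStarProjection.exists_skewAdjoint_exp_conj_eq {a b : A} (ha : IsStarProjection a)
    (hb : IsStarProjection b) (hab : IsUnit (a + b - 1)) :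
    ∃ w : A, star w = -w ∧ a * w + w * a = w ∧ exp w * a * exp (-w) = b := by
  let +nondep : NormedAlgebra ℚ A := .restrictScalars ℚ ℂ A
  have reflection {p : A} (hp : IsStarProjection p) :
      IsSelfAdjoint ((2 : ℂ) • p - 1) ∧ ((2 : ℂ) • p - 1) * ((2 : ℂ) • p - 1) = 1 := by
    refine ⟨((IsSelfAdjoint.ofNat 2).smul hp.isSelfAdjoint).sub (.one A), ?_⟩
    simp only [sub_mul, mul_sub, smul_mul_assoc, mul_smul_comm, hp.isIdempotentElem.eq, mul_one,
      one_mul]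
    module
  obtain ⟨hs, hs2⟩ := reflection ha
  obtain ⟨ht, ht2⟩ := reflection hb
  set s := (2 : ℂ) • a - 1
  set t := (2 : ℂ) • b - 1
  have hts : t * s + 1 = ((2 : ℂ) • (a + b - 1)) * s := by
    simp only [s, t, sub_mul, mul_sub, add_mul, smul_mul_assoc, mul_smul_comm, smul_add, smul_sub,
      ha.isIdempotentElem.eq, mul_one, one_mul]
    module
  have h2 : IsUnit ((2 : ℂ) • (a + b - 1)) := by
    simpa using hab.smul (Units.mk0 (2 : ℂ) two_ne_zero)
  obtain ⟨w, hw, hsw, hexp⟩ := exists_skewAdjoint_exp_conj_eq_of_involutive hs hs2 ht ht2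
    (hts ▸ h2.mul ⟨⟨s, s, hs2, hs2⟩, rfl⟩)
  refine ⟨w, hw, ?_, ?_⟩
  · have hanti : s * w = -w * s := by rw [← hsw, mul_assoc _ _ s, hs2, mul_one]
    simp only [s, sub_mul, mul_sub, smul_mul_assoc, mul_smul_comm, mul_one, one_mul, neg_mul]
      at hanti
    refine smul_right_injective A (two_ne_zero' ℂ) ?_
    linear_combination (norm := module) hanti
  · have ha' : a = (2⁻¹ : ℂ) • (s + 1) := by simp only [s]; module
    rw [ha', mul_smul_comm, smul_mul_assoc, mul_add, add_mul, hexp, mul_one,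
      ← exp_add_of_commute (Commute.refl w).neg_right, add_neg_cancel, exp_zero]
    simp only [t]
    module

end CStarAlgebra

theorem IsStarProjection.exists_isSelfAdjoint_commutator_eq {R : Type*} [Ring R] [StarRing R]
    {a w : R} (ha : IsStarProjection a) (hw : star w = -w) (haw : a * w + w * a = w) :
    ∃ u : R, IsSelfAdjoint u ∧ a * u + u * a = u ∧ u * a - a * u = w := by
  have ha2 : a * a = a := ha.isIdempotentElem.eq
  have hawa : a * w * a = 0 := by
    have h := congr(a * $haw)
    rwa [mul_add, ← mul_assoc, ha2, ← mul_assoc, add_eq_left] at h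
  refine ⟨w * a - a * w, ?_, ?_, ?_⟩
  · rw [IsSelfAdjoint, star_sub, star_mul, star_mul, hw, ha.isSelfAdjoint.star_eq]
    noncomm_ring
  · calc a * (w * a - a * w) + (w * a - a * w) * a
        = a * w * a - a * a * w + w * (a * a) - a * w * a := by noncomm_ring
      _ = w * a - a * w := by rw [hawa, ha2]; abel
  · calc (w * a - a * w) * a - a * (w * a - a * w)
        = w * (a * a) - a * w * a - a * w * a + a * a * w := by noncomm_ring
      _ = w := by rw [hawa, ha2, sub_zero, sub_zero, add_comm, haw]

namespace ContinuousLinearMap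

section RingHom

variable (𝕜 A : Type*) [NontriviallyNormedField 𝕜] [NormedRing A] [NormedAlgebra 𝕜 A]

noncomputable def mulLeftRingHom : A →+* (A →L[𝕜] A) where
  toFun := mul 𝕜 A
  map_one' := by ext; simp
  map_mul' x y := by ext; simp [mul_assoc]
  map_zero' := by simp
  map_add' := by simp

noncomputable def mulRightRingHom : Aᵐᵒᵖ →+* (A →L[𝕜] A) where
  toFun x := (mul 𝕜 A).flip x.unop
  map_one' := by ext; simp
  map_mul' x y := by ext; simp [mul_assoc]
  map_zero' := by simp
  map_add' x y := by simp

end RingHom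

variable {𝕜 A : Type*} [RCLike 𝕜] [NormedRing A] [NormedAlgebra 𝕜 A] [CompleteSpace A]

theorem exp_mul_sub_flip_mul_apply (x z : A) :
    exp (mul 𝕜 A x - (mul 𝕜 A).flip x) z = exp x * z * exp (-x) := by
  let +nondep : NormedAlgebra ℚ A := .restrictScalars ℚ 𝕜 A
  let +nondep : NormedAlgebra ℚ (A →L[𝕜] A) := .restrictScalars ℚ 𝕜 (A →L[𝕜] A)
  have hL : Continuous (mulLeftRingHom 𝕜 A) := (mul 𝕜 A).continuous
  have hR : Continuous (mulRightRingHom 𝕜 A) :=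
    (mul 𝕜 A).flip.continuous.comp MulOpposite.continuous_unop
  have hcomm : Commute (mulLeftRingHom 𝕜 A x) (mulRightRingHom 𝕜 A (.op (-x))) := by
    ext; simp [mulLeftRingHom, mulRightRingHom, mul_assoc]
  have hG : mul 𝕜 A x - (mul 𝕜 A).flip x
      = mulLeftRingHom 𝕜 A x + mulRightRingHom 𝕜 A (.op (-x)) := by
    simp [mulLeftRingHom, mulRightRingHom, sub_eq_add_neg]
  rw [hG, exp_add_of_commute hcomm, ← map_exp _ hL, ← map_exp _ hR, exp_op]
  simp [mulLeftRingHom, mulRightRingHom, mul_assoc]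

end ContinuousLinearMap

/-- Let `a, b ∈ L(H)` be projections of the same finite rank `r`, and
suppose `aba` is invertible in the unital algebra `aL(H)a` with unit `a`.  Then there is a
self-adjoint `u` with `au + ua = u` such that `exp(G(a,u)) a = b`. -/
theorem geodesic_joining_finite_rank_projections (a b : H →L[ℂ] H) (r : ℕ)
    (hasa : IsSelfAdjoint a) (haidem : a * a = a)
    (hafin : FiniteDimensional ℂ (LinearMap.range (a : H →ₗ[ℂ] H)))
    (harank : Module.finrank ℂ (LinearMap.range (a : H →ₗ[ℂ] H)) = r)
    (hbsa : IsSelfAdjoint b) (hbidem : b * b = b)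
    (hbfin : FiniteDimensional ℂ (LinearMap.range (b : H →ₗ[ℂ] H)))
    (hbrank : Module.finrank ℂ (LinearMap.range (b : H →ₗ[ℂ] H)) = r)
    (hinv : ∃ y : H →L[ℂ] H, y = a * y * a ∧ (a * b * a) * y = a ∧ y * (a * b * a) = a) :
    ∃ u : H →L[ℂ] H, IsSelfAdjoint u ∧ a * u + u * a = u ∧
      NormedSpace.exp (G a u) a = b := by
  obtain ⟨y, -, hy, hy'⟩ := hinv
  have ha : IsStarProjection a := ⟨haidem, hasa⟩
  have hab : IsUnit (a + b - 1) :=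
    ContinuousLinearMap.isUnit_add_sub_one haidem hbidem (harank.trans hbrank.symm) hy hy'
  obtain ⟨w, hw, haw, hexp⟩ := ha.exists_skewAdjoint_exp_conj_eq ⟨hbidem, hbsa⟩ hab
  obtain ⟨u, hu, hau, huw⟩ := ha.exists_isSelfAdjoint_commutator_eq hw haw
  refine ⟨u, hu, hau, ?_⟩
  rw [G, huw, ContinuousLinearMap.exp_mul_sub_flip_mul_apply, hexp]
end

section
/- Let a ∈ L(H) be a projection of finite rank r ≥ 1, and let M(r) denote the set of all projections in L(H) of rank r, with the operator-norm topology. Then the antipodal set O_a := {b ∈ M(r) : aba is not invertible in the unital algebra aL(H)a with unit a} has empty interior in M(r); that is, for every b ∈ M(r) and every ε > 0 there exists c ∈ M(r) with ‖c − b‖ < ε and an operator y ∈ L(H) with y = aya and (aca)y = y(aca) = a. -/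
/-!
Write `a = A A†` and `b = B B†` with isometries `A, B : ℂ^r → H`, and move `b` along the
projections `c_t = V_t (V_t† V_t)⁻¹ V_t†` onto the ranges of `V_t = B + t A`. For small `t`,
`V_t† V_t` is invertible, so `c_t` is a rank-`r` projection, close to `c_0 = b`. The compression
`A† c_t A = N_t† (V_t† V_t)⁻¹ N_t`, with `N_t = V_t† A = B† A + t`, is invertible as soon as `-t`
avoids the finite spectrum of `B† A`, and then `y = A (A† c_t A)⁻¹ A†` inverts `a c_t a` in
the corner `a L(H) a`.
-/

open ContinuousLinearMap Filter Topology
open scoped InnerProduct Ring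

theorem eventually_isUnit_add_smul_one {𝕜 E : Type*} [RCLike 𝕜] [NormedAddCommGroup E]
    [NormedSpace 𝕜 E] [FiniteDimensional 𝕜 E] (T : E →L[𝕜] E) :
    ∀ᶠ t : ℝ in 𝓝[≠] 0, IsUnit (T + (t : 𝕜) • 1) := by
  have hfin : (spectrum 𝕜 (-T)).Finite := by
    rw [← (Module.End.toContinuousLinearMap E).apply_symm_apply (-T), AlgEquiv.spectrum_eq]
    exact Module.End.finite_spectrum _
  refine ((hfin.preimage RCLike.ofReal_injective.injOn).eventually_cofinite_notMem.filter_mono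
    (nhdsNE_le_cofinite 0)).mono fun t ht => ?_
  simpa [Algebra.algebraMap_eq_smul_one, add_comm] using spectrum.notMem_iff.mp ht

section Hilbert

variable {𝕜 E F : Type*} [RCLike 𝕜]
  [NormedAddCommGroup E] [InnerProductSpace 𝕜 E] [CompleteSpace E]
  [NormedAddCommGroup F] [InnerProductSpace 𝕜 F] [CompleteSpace F]

theorem IsStarProjection.exists_isometry_comp_adjoint_eq {p : F →L[𝕜] F}
    (hp : IsStarProjection p) [FiniteDimensional 𝕜 (LinearMap.range (p : F →ₗ[𝕜] F))]
    [FiniteDimensional 𝕜 E]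
    (hE : Module.finrank 𝕜 (LinearMap.range (p : F →ₗ[𝕜] F)) = Module.finrank 𝕜 E) :
    ∃ J : E →L[𝕜] F, J† ∘L J = 1 ∧ J ∘L J† = p := by
  obtain ⟨_, hp_eq⟩ := isStarProjection_iff_eq_starProjection_range.mp hp
  set K := LinearMap.range (p : F →ₗ[𝕜] F)
  let e : E ≃ₗᵢ[𝕜] K :=
    (stdOrthonormalBasis 𝕜 E).equiv (stdOrthonormalBasis 𝕜 K) (finCongr hE.symm)
  refine ⟨K.subtypeL ∘L e, ?_, ?_⟩
  · ext x
    rw [adjoint_comp, K.adjoint_subtypeL, e.adjoint_eq_symm, comp_apply, comp_apply, comp_apply,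
      Submodule.subtypeL_apply, K.orthogonalProjectionOnto_mem_subspace_eq_self]
    exact e.symm_apply_apply x
  · rw [hp_eq]
    ext x
    rw [adjoint_comp, K.adjoint_subtypeL, e.adjoint_eq_symm, comp_apply, comp_apply, comp_apply]
    exact congrArg K.subtype (e.apply_symm_apply _)

theorem exists_corner_inverse_of_isUnit_compression {A : E →L[𝕜] F} (hA : A† ∘L A = 1)
    {c : F →L[𝕜] F} (hc : IsUnit (A† ∘L c ∘L A)) :
    ∃ y : F →L[𝕜] F, y = A ∘L A† * y * (A ∘L A†) ∧
      (A ∘L A† * c * (A ∘L A†)) * y = A ∘L A† ∧ y * (A ∘L A† * c * (A ∘L A†)) = A ∘L A† := by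
  obtain ⟨u, hu⟩ := hc
  have hA_apply (x : E) : (A†) (A x) = x := congr($hA x)
  have hu_inv (x : E) : (A†) (c (A ((↑u⁻¹ : E →L[𝕜] E) x))) = x := by
    simpa [hu] using congr($u.mul_inv x)
  have hinv_u (x : E) : (↑u⁻¹ : E →L[𝕜] E) ((A†) (c (A x))) = x := by
    simpa [hu] using congr($u.inv_mul x)
  refine ⟨A ∘L ↑u⁻¹ ∘L A†, ?_, ?_, ?_⟩ <;> ext x <;> simp [hA_apply, hu_inv, hinv_u]

-- The orthogonal projection onto the range of `V` when `V† V` is invertible; junk otherwise,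
-- since `Ring.inverse` vanishes on non-units.
noncomputable def rangeProj (V : E →L[𝕜] F) : F →L[𝕜] F := V ∘L (V† ∘L V)⁻¹ʳ ∘L V†

theorem isSelfAdjoint_rangeProj (V : E →L[𝕜] F) : IsSelfAdjoint (rangeProj V) :=
  ((isPositive_adjoint_comp_self V).isSelfAdjoint.ringInverse).conj_adjoint V

variable {V : E →L[𝕜] F}

theorem rangeProj_comp_self (hV : IsUnit (V† ∘L V)) : rangeProj V ∘L V = V := by
  rw [rangeProj, comp_assoc, comp_assoc, ← mul_def (V† ∘L V)⁻¹ʳ, Ring.inverse_mul_cancel _ hV,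
    one_def, comp_id]

theorem isIdempotentElem_rangeProj (hV : IsUnit (V† ∘L V)) : IsIdempotentElem (rangeProj V) := by
  change rangeProj V ∘L V ∘L _ = _
  rw [← comp_assoc, rangeProj_comp_self hV]
  rfl

theorem injective_of_isUnit_adjoint_comp_self (hV : IsUnit (V† ∘L V)) : Function.Injective V :=
  Function.LeftInverse.injective (g := (V† ∘L V)⁻¹ʳ ∘L V†) fun x => by
    simpa using congr($(Ring.inverse_mul_cancel _ hV) x)

theorem range_rangeProj (hV : IsUnit (V† ∘L V)) :
    LinearMap.range (rangeProj V : F →ₗ[𝕜] F) = LinearMap.range (V : E →ₗ[𝕜] F) := by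
  refine le_antisymm (LinearMap.range_comp_le_range _ _) ?_
  conv_lhs => rw [← rangeProj_comp_self hV]
  exact LinearMap.range_comp_le_range _ _

theorem finrank_range_rangeProj [FiniteDimensional 𝕜 E] (hV : IsUnit (V† ∘L V)) :
    Module.finrank 𝕜 (LinearMap.range (rangeProj V : F →ₗ[𝕜] F)) = Module.finrank 𝕜 E := by
  rw [range_rangeProj hV]
  exact LinearMap.finrank_range_of_inj (injective_of_isUnit_adjoint_comp_self hV)

theorem rangeProj_of_adjoint_comp_self_eq_one (hV : V† ∘L V = 1) : rangeProj V = V ∘L V† := by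
  rw [rangeProj, hV, Ring.inverse_one, one_def, id_comp]

theorem isUnit_adjoint_comp_rangeProj_comp {W : E →L[𝕜] F} (hV : IsUnit (V† ∘L V))
    (hW : IsUnit (V† ∘L W)) : IsUnit (W† ∘L rangeProj V ∘L W) := by
  have : W† ∘L rangeProj V ∘L W = (V† ∘L W)† * (V† ∘L V)⁻¹ʳ * (V† ∘L W) := by
    simp only [rangeProj, adjoint_comp, adjoint_adjoint, mul_def, comp_assoc]
  rw [this]
  exact ((star_eq_adjoint (V† ∘L W)) ▸ hW.star).mul hV.ringInverse |>.mul hW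

theorem ContinuousAt.rangeProj {X : Type*} [TopologicalSpace X] {f : X → E →L[𝕜] F} {x : X}
    (hf : ContinuousAt f x) (hx : IsUnit ((f x)† ∘L f x)) :
    ContinuousAt (fun y => _root_.rangeProj (f y)) x := by
  have hadj : ContinuousAt (fun y => (f y)†) x := adjoint.continuous.continuousAt.comp hf
  obtain ⟨u, hu⟩ := hx
  have hinv : ContinuousAt (fun y => ((f y)† ∘L f y)⁻¹ʳ) x :=
    ContinuousAt.comp (g := Ring.inverse) (hu ▸ NormedRing.inverse_continuousAt u)
      (hadj.clm_comp hf)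
  exact hf.clm_comp (hinv.clm_comp hadj)

end Hilbert

variable {H : Type*} [NormedAddCommGroup H] [InnerProductSpace ℂ H] [CompleteSpace H]

/-- Let `a ∈ L(H)` be a projection of finite rank `r ≥ 1`.  The
antipodal set `O_a := {b ∈ M(r) : aba not invertible in aL(H)a}` has empty interior in
the manifold `M(r)` of rank-`r` projections: for every rank-`r` projection `b` and every
`ε > 0` there is a rank-`r` projection `c` with `‖c - b‖ < ε` such that `aca` is
invertible in the unital algebra `aL(H)a` with unit `a`. -/
theorem antipodal_set_empty_interior (a : H →L[ℂ] H) (r : ℕ) (hr : 1 ≤ r)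
    (hasa : IsSelfAdjoint a) (haidem : a * a = a)
    (harank : Module.finrank ℂ (LinearMap.range (a : H →ₗ[ℂ] H)) = r) :
    ∀ b : H →L[ℂ] H, IsSelfAdjoint b → b * b = b →
      Module.finrank ℂ (LinearMap.range (b : H →ₗ[ℂ] H)) = r →
      ∀ ε : ℝ, 0 < ε →
        ∃ c : H →L[ℂ] H, IsSelfAdjoint c ∧ c * c = c ∧
          Module.finrank ℂ (LinearMap.range (c : H →ₗ[ℂ] H)) = r ∧ ‖c - b‖ < ε ∧
          ∃ y : H →L[ℂ] H, y = a * y * a ∧ (a * c * a) * y = a ∧ y * (a * c * a) = a := by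
  intro b hbsa hbidem hbrank ε hε
  have hE : Module.finrank ℂ (EuclideanSpace ℂ (Fin r)) = r := finrank_euclideanSpace_fin
  have := FiniteDimensional.of_finrank_pos (harank ▸ hr)
  have := FiniteDimensional.of_finrank_pos (hbrank ▸ hr)
  obtain ⟨A, hA, rfl⟩ :=
    IsStarProjection.exists_isometry_comp_adjoint_eq ⟨haidem, hasa⟩ (harank.trans hE.symm)
  obtain ⟨B, hB, rfl⟩ :=
    IsStarProjection.exists_isometry_comp_adjoint_eq ⟨hbidem, hbsa⟩ (hbrank.trans hE.symm)
  set V : ℝ → EuclideanSpace ℂ (Fin r) →L[ℂ] H := fun t => B + (t : ℂ) • A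
  have hV : Continuous V := by fun_prop
  have hV0 : (V 0)† ∘L V 0 = 1 := by simpa [V] using hB
  have hVA (t : ℝ) : (V t)† ∘L A = B† ∘L A + (t : ℂ) • 1 := by
    rw [map_add, map_smulₛₗ, add_comp, smul_comp, hA, Complex.conj_ofReal]
  have hunit : ∀ᶠ t in 𝓝 0, IsUnit ((V t)† ∘L V t) :=
    ((adjoint.continuous.comp hV).clm_comp hV).continuousAt.eventually
      (Units.isOpen.mem_nhds (by simp [hV0]))
  have hclose : ∀ᶠ t in 𝓝 0, ‖rangeProj (V t) - B ∘L B†‖ < ε := by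
    have := (hV.continuousAt.rangeProj (hV0 ▸ isUnit_one)).eventually
      (Metric.ball_mem_nhds _ hε)
    simpa [rangeProj_of_adjoint_comp_self_eq_one hB, dist_eq_norm, V] using this
  obtain ⟨t, ⟨hGt, hct⟩, hNt⟩ := (((hunit.and hclose).filter_mono nhdsWithin_le_nhds).and
    (eventually_isUnit_add_smul_one (B† ∘L A))).exists
  exact ⟨rangeProj (V t), isSelfAdjoint_rangeProj _, isIdempotentElem_rangeProj hGt,
    (finrank_range_rangeProj hGt).trans hE, hct,
    exists_corner_inverse_of_isUnit_compression hA
      (isUnit_adjoint_comp_rangeProj_comp hGt (hVA t ▸ hNt))⟩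
end

section
/- Let a, b ∈ L(H) be projections of the same finite rank r ≥ 1. Then there exist finitely many projections p₁, …, p_m ∈ L(H), each of rank r, such that b = w_m ⋯ w₁ a w₁ ⋯ w_m, where w_i := 2p_i − 1; that is, the composition of the Peirce reflections x ↦ (2p_i − 1)x(2p_i − 1) maps a to b. In other words, the group generated by the Peirce reflections at rank-r projections acts transitively on the set of rank-r projections. -/
/-!
A single Peirce reflection suffices. For finite-dimensional subspaces `M`, `N` of equal dimension
pick principal vectors: unit vectors `x ∈ M`, `y ∈ N` with `⟪x, y⟫ ≥ 0`, `y ⊥ M ∩ x⊥` and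
`x ⊥ N ∩ y⊥` (an eigenvector `x` of `p_M p_N` on `M` with `p_N x ≠ 0` and `y ∝ p_N x`, or any
pair if `M ⊥ N`). The reflection in the line through `x + y` swaps `x` and `y`. By induction on the
dimension, adding this line to the subspace `K'` whose reflection maps `M ∩ x⊥` onto `N ∩ y⊥`
gives a subspace `K` with `dim K = dim M` whose reflection `2 p_K - 1` maps `M` onto `N`;
conjugation by it carries `p_M` to `p_N`.
-/

open Module Submodule
open scoped ComplexOrder

namespace Submodule

variable {𝕜 E : Type*} [RCLike 𝕜] [NormedAddCommGroup E] [InnerProductSpace 𝕜 E]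

local notation "⟪" x ", " y "⟫" => inner 𝕜 x y

theorem reflection_eq_iff {K : Submodule 𝕜 E} [K.HasOrthogonalProjection] {v w : E} :
    K.reflection v = w ↔ v + w ∈ K ∧ v - w ∈ Kᗮ := by
  constructor
  · rintro rfl
    rw [reflection_apply]
    constructor
    · simpa [two_smul] using K.smul_mem (2 : 𝕜) (K.starProjection_apply_mem v)
    · convert Kᗮ.smul_mem (2 : 𝕜) (K.sub_starProjection_mem_orthogonal v) using 1
      module
  · rintro ⟨hK, hKo⟩
    have hP : K.starProjection v = (2 : 𝕜)⁻¹ • (v + w) := by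
      refine eq_starProjection_of_mem_orthogonal (K.smul_mem _ hK) ?_
      convert Kᗮ.smul_mem (2 : 𝕜)⁻¹ hKo using 1
      module
    rw [reflection_apply, hP]
    module

theorem starProjection_map_reflection (K M : Submodule 𝕜 E) [K.HasOrthogonalProjection]
    [M.HasOrthogonalProjection] :
    (M.map (K.reflection.toLinearEquiv : E →ₗ[𝕜] E)).starProjection =
      (2 • K.starProjection - 1) * M.starProjection * (2 • K.starProjection - 1) := by
  ext v
  simp [starProjection_map_apply, reflection_apply]

theorem reflection_sup_span_singleton_apply_of_inner_eq_zero {K : Submodule 𝕜 E}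
    [FiniteDimensional 𝕜 K] {u v : E} (hu : u ∈ Kᗮ) (hv : ⟪u, v⟫ = 0) :
    (K ⊔ 𝕜 ∙ u).reflection v = K.reflection v := by
  obtain ⟨hadd, hsub⟩ := reflection_eq_iff.mp (rfl : K.reflection v = _)
  refine reflection_eq_iff.mpr ⟨mem_sup_left hadd, ?_⟩
  rw [← inf_orthogonal]
  refine mem_inf.mpr ⟨hsub, mem_orthogonal_singleton_iff_inner_right.mpr ?_⟩
  have h2v : v - K.reflection v = (2 : 𝕜) • v - (v + K.reflection v) := by module
  rw [h2v, inner_sub_right, inner_smul_right, hv, inner_eq_zero_symm.mp (hu _ hadd)]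
  simp

theorem reflection_sup_span_add_apply {K : Submodule 𝕜 E} [FiniteDimensional 𝕜 K] {x y : E}
    (hx : x ∈ Kᗮ) (hy : y ∈ Kᗮ) (hnorm : ‖x‖ = ‖y‖) (hxy : ⟪x, y⟫ = ⟪y, x⟫) :
    (K ⊔ 𝕜 ∙ (x + y)).reflection x = y := by
  refine reflection_eq_iff.mpr ⟨mem_sup_right (mem_span_singleton_self _), ?_⟩
  rw [← inf_orthogonal]
  refine mem_inf.mpr ⟨sub_mem hx hy, mem_orthogonal_singleton_iff_inner_right.mpr ?_⟩
  rw [inner_add_left, inner_sub_right, inner_sub_right, inner_self_eq_norm_sq_to_K,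
    inner_self_eq_norm_sq_to_K, hnorm, hxy]
  ring

theorem finrank_sup_span_singleton_of_mem_orthogonal {K : Submodule 𝕜 E}
    [FiniteDimensional 𝕜 K] {u : E} (hu : u ∈ Kᗮ) (hu0 : u ≠ 0) :
    finrank 𝕜 (K ⊔ 𝕜 ∙ u : Submodule 𝕜 E) = finrank 𝕜 K + 1 := by
  have hdisj : K ⊓ 𝕜 ∙ u = ⊥ := ((orthogonal_disjoint (𝕜 ∙ u)).mono_right
    (le_orthogonal_iff_le_orthogonal.mp ((span_singleton_le_iff_mem _ _).mpr hu))).symm.eq_bot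
  have := finrank_sup_add_finrank_inf_eq K (𝕜 ∙ u)
  rwa [hdisj, finrank_bot, add_zero, finrank_span_singleton hu0] at this

theorem finrank_orthogonal_span_singleton_inf {M : Submodule 𝕜 E} [FiniteDimensional 𝕜 M]
    {x : E} (hxM : x ∈ M) (hx : x ≠ 0) :
    finrank 𝕜 ((𝕜 ∙ x)ᗮ ⊓ M : Submodule 𝕜 E) + 1 = finrank 𝕜 M := by
  rw [← finrank_add_inf_finrank_orthogonal ((span_singleton_le_iff_mem _ _).mpr hxM),
    finrank_span_singleton hx, add_comm]

theorem exists_norm_eq_one_mem {M : Submodule 𝕜 E} (hM : M ≠ ⊥) : ∃ x ∈ M, ‖x‖ = 1 := by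
  obtain ⟨x, hxM, hx⟩ := exists_mem_ne_zero_of_ne_bot hM
  exact ⟨(‖x‖⁻¹ : 𝕜) • x, M.smul_mem _ hxM, norm_smul_inv_norm hx⟩

theorem exists_eigenvector_starProjection_comp_starProjection (M N : Submodule 𝕜 E)
    [FiniteDimensional 𝕜 M] [FiniteDimensional 𝕜 N] (hMN : ¬M ≤ Nᗮ) :
    ∃ x ∈ M, ‖x‖ = 1 ∧ N.starProjection x ≠ 0 ∧
      ∃ μ : 𝕜, M.starProjection (N.starProjection x) = μ • x := by
  have hT : (M.orthogonalProjectionOnto ∘L N.starProjection ∘L M.subtypeL :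
      M →ₗ[𝕜] M).IsSymmetric := fun m m' => by
    simp [inner_starProjection_left_eq_right]
  let b := hT.eigenvectorBasis rfl
  obtain ⟨i, hi⟩ : ∃ i, N.starProjection (b i) ≠ 0 := by
    by_contra! h
    have hzero : (N.starProjection : E →ₗ[𝕜] E) ∘ₗ M.subtype = 0 :=
      b.toBasis.ext fun i => by simpa using h i
    exact hMN fun m hm =>
      (starProjection_apply_eq_zero_iff N).mp (LinearMap.congr_fun hzero ⟨m, hm⟩)
  refine ⟨b i, (b i).2, b.norm_eq_one i, hi, hT.eigenvalues rfl i, ?_⟩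
  rw [starProjection_apply]
  exact congrArg ((↑) : M → E) (hT.apply_eigenvectorBasis rfl i)

theorem exists_principal_vectors (M N : Submodule 𝕜 E) [FiniteDimensional 𝕜 M]
    [FiniteDimensional 𝕜 N] (hM : M ≠ ⊥) (hN : N ≠ ⊥) :
    ∃ x ∈ M, ∃ y ∈ N, ‖x‖ = 1 ∧ ‖y‖ = 1 ∧ 0 ≤ ⟪x, y⟫ ∧
      y ∈ ((𝕜 ∙ x)ᗮ ⊓ M)ᗮ ∧ x ∈ ((𝕜 ∙ y)ᗮ ⊓ N)ᗮ := by
  by_cases hMN : M ≤ Nᗮ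
  · obtain ⟨x, hxM, hx⟩ := exists_norm_eq_one_mem hM
    obtain ⟨y, hyN, hy⟩ := exists_norm_eq_one_mem hN
    have hNM : N ≤ Mᗮ := le_orthogonal_iff_le_orthogonal.mp hMN
    refine ⟨x, hxM, y, hyN, hx, hy, ?_, orthogonal_le inf_le_right (hNM hyN),
      orthogonal_le inf_le_right (hMN hxM)⟩
    rw [hNM hyN x hxM]
  obtain ⟨x, hxM, hx, hz, μ, hμ⟩ := exists_eigenvector_starProjection_comp_starProjection M N hMN
  set z := N.starProjection x
  have hzM (m : E) (hm : m ∈ M) : ⟪m, z⟫ = μ * ⟪m, x⟫ := by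
    rw [← inner_smul_right, ← hμ, ← inner_starProjection_left_eq_right M,
      starProjection_eq_self_iff.mpr hm]
  have hzN (n : E) (hn : n ∈ N) : ⟪x, n⟫ = ⟪z, n⟫ := by
    rw [inner_starProjection_left_eq_right N, starProjection_eq_self_iff.mpr hn]
  have hxz : ⟪x, z⟫ = (‖z‖ : 𝕜) ^ 2 := by
    rw [hzN z (N.starProjection_apply_mem x), inner_self_eq_norm_sq_to_K]
  refine ⟨x, hxM, (‖z‖⁻¹ : 𝕜) • z, N.smul_mem _ (N.starProjection_apply_mem x), hx,
    norm_smul_inv_norm hz, ?_, ?_, ?_⟩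
  · rw [inner_smul_right, hxz]
    exact_mod_cast (by positivity : (0 : ℝ) ≤ ‖z‖⁻¹ * ‖z‖ ^ 2)
  · intro m hm
    obtain ⟨hmx, hmM⟩ := mem_inf.mp hm
    rw [inner_smul_right, hzM m hmM, mem_orthogonal_singleton_iff_inner_left.mp hmx]
    simp
  · intro n hn
    obtain ⟨hny, hnN⟩ := mem_inf.mp hn
    rw [mem_orthogonal_singleton_iff_inner_right] at hny
    rw [inner_eq_zero_symm, hzN n hnN]
    simpa [inner_smul_left, hz] using hny

theorem map_reflection_sup_span_add {K' M' N' : Submodule 𝕜 E} [FiniteDimensional 𝕜 K']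
    (hK' : K' ≤ M' ⊔ N') (hmap : M'.map (K'.reflection.toLinearEquiv : E →ₗ[𝕜] E) = N')
    {x y : E} (hx : x ∈ (M' ⊔ N')ᗮ) (hy : y ∈ (M' ⊔ N')ᗮ) (hnorm : ‖x‖ = ‖y‖)
    (hxy : ⟪x, y⟫ = ⟪y, x⟫) :
    (𝕜 ∙ x ⊔ M').map ((K' ⊔ 𝕜 ∙ (x + y)).reflection.toLinearEquiv : E →ₗ[𝕜] E) = 𝕜 ∙ y ⊔ N' := by
  have hxK' := orthogonal_le hK' hx
  have hyK' := orthogonal_le hK' hy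
  rw [map_sup, map_span, Set.image_singleton, ← hmap]
  congr 1
  · simp [reflection_sup_span_add_apply hxK' hyK' hnorm hxy]
  refine SetLike.coe_injective ?_
  simp only [map_coe, LinearEquiv.coe_coe, LinearIsometryEquiv.coe_toLinearEquiv]
  exact Set.image_congr fun m hm => reflection_sup_span_singleton_apply_of_inner_eq_zero
    (add_mem hxK' hyK') (inner_eq_zero_symm.mp (add_mem hx hy m (mem_sup_left hm)))

theorem exists_reflection_map_eq (M N : Submodule 𝕜 E) [FiniteDimensional 𝕜 M]
    [FiniteDimensional 𝕜 N] (h : finrank 𝕜 M = finrank 𝕜 N) :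
    ∃ (K : Submodule 𝕜 E) (_ : FiniteDimensional 𝕜 K), K ≤ M ⊔ N ∧
      finrank 𝕜 K = finrank 𝕜 M ∧ M.map (K.reflection.toLinearEquiv : E →ₗ[𝕜] E) = N := by
  obtain ⟨n, hn⟩ : ∃ n, finrank 𝕜 M = n := ⟨_, rfl⟩
  induction n generalizing M N with
  | zero =>
    obtain rfl : M = ⊥ := finrank_eq_zero.mp hn
    obtain rfl : N = ⊥ := finrank_eq_zero.mp (h ▸ hn)
    exact ⟨⊥, inferInstance, bot_le, by simp, by simp⟩
  | succ n ih =>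
    have hM : M ≠ ⊥ := fun h0 => by rw [← finrank_eq_zero] at h0; omega
    have hN : N ≠ ⊥ := fun h0 => by rw [← finrank_eq_zero] at h0; omega
    obtain ⟨x, hxM, y, hyN, hx, hy, hxy, hyM', hxN'⟩ := exists_principal_vectors M N hM hN
    set M' := (𝕜 ∙ x)ᗮ ⊓ M
    set N' := (𝕜 ∙ y)ᗮ ⊓ N
    have hM' : finrank 𝕜 M' = n := Nat.succ_injective <|
      (finrank_orthogonal_span_singleton_inf hxM (norm_ne_zero_iff.mp (hx ▸ one_ne_zero))).trans hn
    have hN' : finrank 𝕜 N' = n := Nat.succ_injective <|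
      (finrank_orthogonal_span_singleton_inf hyN (norm_ne_zero_iff.mp (hy ▸ one_ne_zero))).trans
        (h ▸ hn)
    obtain ⟨K', _, hK'le, hK'rank, hK'map⟩ := ih M' N' (hM'.trans hN'.symm) hM'
    have hxo : x ∈ (M' ⊔ N')ᗮ := inf_orthogonal M' N' ▸ mem_inf.mpr
      ⟨orthogonal_le inf_le_left (le_orthogonal_orthogonal _ (mem_span_singleton_self x)), hxN'⟩
    have hyo : y ∈ (M' ⊔ N')ᗮ := inf_orthogonal M' N' ▸ mem_inf.mpr
      ⟨hyM', orthogonal_le inf_le_left (le_orthogonal_orthogonal _ (mem_span_singleton_self y))⟩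
    have hxy0 : x + y ≠ 0 := by
      intro hxy0
      rw [eq_neg_of_add_eq_zero_right hxy0, inner_neg_right, inner_self_eq_norm_sq_to_K, hx,
        RCLike.nonneg_iff] at hxy
      norm_num at hxy
    have hyx : ⟪x, y⟫ = ⟪y, x⟫ := by
      rw [← inner_conj_symm y x, RCLike.conj_eq_iff_im.mpr (RCLike.nonneg_iff.mp hxy).2]
    refine ⟨K' ⊔ 𝕜 ∙ (x + y), inferInstance,
      sup_le (hK'le.trans (sup_le_sup inf_le_right inf_le_right))
        ((span_singleton_le_iff_mem _ _).mpr (add_mem_sup hxM hyN)), ?_, ?_⟩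
    · rw [finrank_sup_span_singleton_of_mem_orthogonal (orthogonal_le hK'le (add_mem hxo hyo))
        hxy0, hK'rank, hM', hn]
    rw [← sup_orthogonal_inf_of_hasOrthogonalProjection ((span_singleton_le_iff_mem _ _).mpr hxM),
      map_reflection_sup_span_add hK'le hK'map hxo hyo (hx.trans hy.symm) hyx]
    exact sup_orthogonal_inf_of_hasOrthogonalProjection ((span_singleton_le_iff_mem _ _).mpr hyN)

end Submodule

theorem IsStarProjection.exists_reflection_conj_eq_of_finrank_eq {𝕜 E : Type*} [RCLike 𝕜]
    [NormedAddCommGroup E] [InnerProductSpace 𝕜 E] [CompleteSpace E] {a b : E →L[𝕜] E}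
    (ha : IsStarProjection a) (hb : IsStarProjection b)
    [FiniteDimensional 𝕜 (LinearMap.range (a : E →ₗ[𝕜] E))]
    [FiniteDimensional 𝕜 (LinearMap.range (b : E →ₗ[𝕜] E))]
    (h : finrank 𝕜 (LinearMap.range (a : E →ₗ[𝕜] E)) =
      finrank 𝕜 (LinearMap.range (b : E →ₗ[𝕜] E))) :
    ∃ (K : Submodule 𝕜 E) (_ : FiniteDimensional 𝕜 K),
      finrank 𝕜 K = finrank 𝕜 (LinearMap.range (a : E →ₗ[𝕜] E)) ∧
      b = (2 • K.starProjection - 1) * a * (2 • K.starProjection - 1) := by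
  obtain ⟨K, _, -, hK, hKab⟩ := exists_reflection_map_eq _ _ h
  refine ⟨K, inferInstance, hK, ?_⟩
  rw [ContinuousLinearMap.IsStarProjection.ext ha isStarProjection_starProjection
      (range_starProjection _).symm,
    ← starProjection_map_reflection]
  exact ContinuousLinearMap.IsStarProjection.ext hb isStarProjection_starProjection
    (by rw [range_starProjection, hKab])

variable {H : Type*} [NormedAddCommGroup H] [InnerProductSpace ℂ H] [CompleteSpace H]

/-- Let `a, b ∈ L(H)` be projections of the same finite rank `r ≥ 1`.
Then there are finitely many rank-`r` projections `p₁, …, pₘ` such that the composition of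
the Peirce reflections `x ↦ (2pᵢ - 1) x (2pᵢ - 1)` (applied successively for
`i = 1, …, m`) maps `a` to `b`; i.e. the group generated by Peirce reflections at rank-`r`
projections acts transitively on rank-`r` projections. -/
theorem peirce_reflections_transitive (a b : H →L[ℂ] H) (r : ℕ) (hr : 1 ≤ r)
    (hasa : IsSelfAdjoint a) (haidem : a * a = a)
    (harank : Module.finrank ℂ (LinearMap.range (a : H →ₗ[ℂ] H)) = r)
    (hbsa : IsSelfAdjoint b) (hbidem : b * b = b)
    (hbrank : Module.finrank ℂ (LinearMap.range (b : H →ₗ[ℂ] H)) = r) :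
    ∃ (m : ℕ) (p : Fin m → H →L[ℂ] H),
      (∀ i, IsSelfAdjoint (p i) ∧ p i * p i = p i ∧
        Module.finrank ℂ (LinearMap.range (p i : H →ₗ[ℂ] H)) = r) ∧
      b = (List.finRange m).foldl
            (fun x i => (2 • p i - 1) * x * (2 • p i - 1)) a := by
  have : FiniteDimensional ℂ (LinearMap.range (a : H →ₗ[ℂ] H)) := finite_of_finrank_pos (by omega)
  have : FiniteDimensional ℂ (LinearMap.range (b : H →ₗ[ℂ] H)) := finite_of_finrank_pos (by omega)
  obtain ⟨K, _, hK, hKab⟩ := IsStarProjection.exists_reflection_conj_eq_of_finrank_eq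
    ⟨haidem, hasa⟩ ⟨hbidem, hbsa⟩ (harank.trans hbrank.symm)
  exact ⟨1, fun _ => K.starProjection, fun _ => ⟨isSelfAdjoint_starProjection K,
    K.isIdempotentElem_starProjection, by rw [range_starProjection, hK, harank]⟩, hKab⟩
end
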